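/- arXiv:2103.08240 — 3 statements merged into one kernel-verified Lean document; each statement's English description precedes it below -/
import Mathlib

section
/- Let ψ be a Cartan–Hadamard model function and u a global radial solution with initial datum α > 0. Then u′(r)/u(r) ≥ −(p/((p−1)(q+1)))·Θ(r)^{−1} for every r > 0; equivalently, −u′(r)·Θ(r) ≤ (p/((p−1)(q+1)))·u(r) for every r > 0. -/
open Real Filter MeasureTheory
open scoped ENNReal Topology

/-- The volume-to-surface ratio `Θ(r) = (∫₀ʳ ψ(s)^{n-1} ds) / ψ(r)^{n-1}`. -/
noncomputable def Theta (n : ℕ) (ψ : ℝ → ℝ) (r : ℝ) : ℝ :=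
  (∫ s in (0:ℝ)..r, ψ s ^ (n - 1)) / ψ r ^ (n - 1)

/-- A Cartan–Hadamard model function: smooth, `ψ(0)=0`, `ψ'(0)=1`, convex on `[0,∞)`,
positive on `(0,∞)`. -/
def IsCHModel (ψ : ℝ → ℝ) : Prop :=
  ContDiff ℝ (⊤ : ℕ∞) ψ ∧ ψ 0 = 0 ∧ deriv ψ 0 = 1 ∧
    (∀ r : ℝ, 0 ≤ r → 0 ≤ deriv (deriv ψ) r) ∧ (∀ r : ℝ, 0 < r → 0 < ψ r)

/-- A radial solution on `[0,T)` (with `T ∈ (0,∞]`) with initial datum `α`: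
`u ∈ C¹([0,T))`, `u(0)=α`, `u'(0)=0`, `u>0` on `[0,T)`, and
`(ψ^{n-1} |u'|^{p-2} u')' = -ψ^{n-1} u^q` on `(0,T)`. -/
structure IsRadialSolution (n : ℕ) (p q : ℝ) (ψ : ℝ → ℝ) (T : ℝ≥0∞) (α : ℝ)
    (u : ℝ → ℝ) : Prop where
  init : u 0 = α
  deriv_init : deriv u 0 = 0
  pos : ∀ r : ℝ, 0 ≤ r → ENNReal.ofReal r < T → 0 < u r
  diff : ∀ r : ℝ, 0 ≤ r → ENNReal.ofReal r < T → DifferentiableAt ℝ u r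
  deriv_cont : ContinuousOn (deriv u) {r : ℝ | 0 ≤ r ∧ ENNReal.ofReal r < T}
  eqn : ∀ r : ℝ, 0 < r → ENNReal.ofReal r < T →
    HasDerivAt (fun s => ψ s ^ (n - 1) * |deriv u s| ^ (p - 2) * deriv u s)
      (-(ψ r ^ (n - 1) * u r ^ q)) r

/-- The energy function `F_u(r) = ((p-1)/p)|u'(r)|^p + u(r)^{q+1}/(q+1)`. -/
noncomputable def energyF (p q : ℝ) (u : ℝ → ℝ) (r : ℝ) : ℝ :=
  (p - 1) / p * |deriv u r| ^ p + u r ^ (q + 1) / (q + 1)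

/-- The Pohozaev function
`P_u(r) = (∫₀ʳ ψ^{n-1}) F_u(r) + (ψ(r)^{n-1}/(q+1)) |u'(r)|^{p-2} u'(r) u(r)`. -/
noncomputable def pohozaevP (n : ℕ) (p q : ℝ) (ψ u : ℝ → ℝ) (r : ℝ) : ℝ :=
  (∫ s in (0:ℝ)..r, ψ s ^ (n - 1)) * energyF p q u r +
    ψ r ^ (n - 1) / (q + 1) * (|deriv u r| ^ (p - 2) * deriv u r * u r)

/-- `K(r) = ((p-1)/p + 1/(q+1)) ψ(r)^{n-1} - (n-1)(ψ'(r)/ψ(r)) ∫₀ʳ ψ^{n-1}`. -/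
noncomputable def Kfun (n : ℕ) (p q : ℝ) (ψ : ℝ → ℝ) (r : ℝ) : ℝ :=
  ((p - 1) / p + 1 / (q + 1)) * ψ r ^ (n - 1) -
    ((n : ℝ) - 1) * (deriv ψ r / ψ r) * ∫ s in (0:ℝ)..r, ψ s ^ (n - 1)

/-- Condition (a): `r^γ ψ'(r)/ψ(r) → ℓ ∈ (0,∞)` for some `γ ∈ [0,1)`. -/
def CondA (ψ : ℝ → ℝ) : Prop :=
  ∃ γ ℓ : ℝ, 0 ≤ γ ∧ γ < 1 ∧ 0 < ℓ ∧
    Tendsto (fun r : ℝ => r ^ γ * deriv ψ r / ψ r) atTop (nhds ℓ)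

/-- Condition (b): `ψ'/ψ → +∞` and `(ψ/ψ') (log(ψ'/ψ))' → 0`. -/
def CondB (ψ : ℝ → ℝ) : Prop :=
  Tendsto (fun r : ℝ => deriv ψ r / ψ r) atTop atTop ∧
    Tendsto (fun r : ℝ => ψ r / deriv ψ r *
      deriv (fun s : ℝ => Real.log (deriv ψ s / ψ s)) r) atTop (nhds 0)


lemma gp_abs {p : ℝ} (hp : 1 < p) (a : ℝ) : |(|a| ^ (p - 2) * a)| = |a| ^ (p - 1) := by
  rcases eq_or_ne a 0 with rfl | h
  · simp [Real.zero_rpow (by intro h; linarith [h] : p - 1 ≠ 0)]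
  · have ha : (0 : ℝ) < |a| := abs_pos.mpr h
    rw [abs_mul, abs_of_nonneg (Real.rpow_nonneg (abs_nonneg a) _),
      show p - 1 = (p - 2) + 1 by ring, Real.rpow_add ha, Real.rpow_one]

lemma gp_pow {p : ℝ} (hp : 1 < p) (a : ℝ) :
    |(|a| ^ (p - 2) * a)| ^ (p / (p - 1)) = |a| ^ p := by
  rw [gp_abs hp, ← Real.rpow_mul (abs_nonneg a),
    show (p - 1) * (p / (p - 1)) = p by rw [mul_div_cancel₀]; intro h; linarith [h]]

lemma gp_inv {p : ℝ} (hp : 1 < p) (a : ℝ) :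
    |(|a| ^ (p - 2) * a)| ^ (p / (p - 1) - 2) * (|a| ^ (p - 2) * a) = a := by
  rcases eq_or_ne a 0 with rfl | h
  · simp
  · have ha : (0 : ℝ) < |a| := abs_pos.mpr h
    rw [gp_abs hp, ← Real.rpow_mul ha.le]
    have hp1 : p - 1 ≠ 0 := by intro h; linarith [h]
    have h1 : (p - 1) * (p / (p - 1) - 2) = 2 - p := by
      field_simp; ring
    rw [h1, ← mul_assoc, ← Real.rpow_add ha]
    norm_num

lemma gp_mul_self {p : ℝ} (hp : 1 < p) (a : ℝ) :
    |a| ^ (p - 2) * a * a = |a| ^ p := by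
  rcases eq_or_ne a 0 with rfl | h
  · simp [Real.zero_rpow (by intro h; linarith [h] : p ≠ 0)]
  · have ha : (0 : ℝ) < |a| := abs_pos.mpr h
    have h2 : a * a = |a| ^ (2 : ℝ) := by
      rw [show (2:ℝ) = ((2:ℕ):ℝ) by norm_num, Real.rpow_natCast, sq, abs_mul_abs_self]
    rw [mul_assoc, h2, ← Real.rpow_add ha]
    norm_num

lemma gp_continuous {p : ℝ} (hp : 1 < p) :
    Continuous fun t : ℝ => |t| ^ (p - 2) * t := by
  rw [continuous_iff_continuousAt]
  intro x
  rcases eq_or_ne x 0 with rfl | hx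
  · have h0 : |(0:ℝ)| ^ (p - 2) * 0 = 0 := by simp
    rw [ContinuousAt, h0]
    apply squeeze_zero_norm (a := fun t : ℝ => |t| ^ (p - 1))
    · intro t
      rw [Real.norm_eq_abs, gp_abs hp]
    · have : ContinuousAt (fun t : ℝ => |t| ^ (p - 1)) 0 :=
        ((Real.continuousAt_rpow_const _ _ (Or.inr (by linarith))).comp
          continuous_abs.continuousAt)
      rw [ContinuousAt] at this
      simpa [Real.zero_rpow (show p - 1 ≠ 0 by intro h; linarith [h])] using this
  · exact (((Real.continuousAt_rpow_const _ _
      (Or.inl (abs_ne_zero.mpr hx))).comp continuous_abs.continuousAt).mul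
        continuousAt_id)

lemma abs_rpow_hasDerivAt {c : ℝ} (hc : 1 < c) (x : ℝ) :
    HasDerivAt (fun t : ℝ => |t| ^ c) (c * (|x| ^ (c - 2) * x)) x := by
  rcases lt_trichotomy x 0 with hx | rfl | hx
  · have hx' : (0:ℝ) < -x := by linarith
    have h1 : HasDerivAt (fun t : ℝ => (-t) ^ c) ((c * (-x) ^ (c - 1)) * (-1)) x :=
      (Real.hasDerivAt_rpow_const (Or.inl hx'.ne')).comp x (hasDerivAt_neg x)
    have hev : (fun t : ℝ => |t| ^ c) =ᶠ[𝓝 x] fun t : ℝ => (-t) ^ c := by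
      filter_upwards [eventually_lt_nhds hx] with t ht
      rw [abs_of_neg ht]
    have heq : (c * (-x) ^ (c - 1)) * (-1) = c * (|x| ^ (c - 2) * x) := by
      rw [abs_of_neg hx, show c - 1 = (c - 2) + 1 by ring, Real.rpow_add hx',
        Real.rpow_one]
      ring
    exact heq ▸ (h1.congr_of_eventuallyEq hev)
  · have h0 : c * (|(0:ℝ)| ^ (c - 2) * 0) = 0 := by simp
    rw [h0, hasDerivAt_iff_tendsto_slope]
    have hcne : c ≠ 0 := by intro h; linarith [h]
    have htend : Tendsto (fun t : ℝ => |t| ^ (c - 1)) (𝓝[≠] (0:ℝ)) (𝓝 0) := by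
      have : ContinuousAt (fun t : ℝ => |t| ^ (c - 1)) 0 :=
        (Real.continuousAt_rpow_const _ _ (Or.inr (by linarith))).comp
          continuous_abs.continuousAt
      rw [ContinuousAt] at this
      have h2 := this.mono_left (nhdsWithin_le_nhds (s := {(0:ℝ)}ᶜ))
      simpa [Real.zero_rpow (show c - 1 ≠ 0 by intro h; linarith [h])] using h2
    apply squeeze_zero_norm (a := fun t : ℝ => |t| ^ (c - 1)) _ htend
    intro t
    rcases eq_or_ne t 0 with rfl | ht
    · simp [slope, Real.zero_rpow (show c - 1 ≠ 0 by intro h; linarith [h])]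
    · have hat : (0:ℝ) < |t| := abs_pos.mpr ht
      rw [slope_def_field, abs_zero, Real.zero_rpow hcne, sub_zero, sub_zero]
      calc ‖|t| ^ c / t‖ = |t| ^ c / |t| := by
            rw [Real.norm_eq_abs, abs_div,
              abs_of_nonneg (Real.rpow_nonneg (abs_nonneg t) c)]
        _ = |t| ^ (c - 1) := by rw [Real.rpow_sub hat, Real.rpow_one]
        _ ≤ |t| ^ (c - 1) := le_refl _
  · have h1 : HasDerivAt (fun t : ℝ => t ^ c) (c * x ^ (c - 1)) x :=
      Real.hasDerivAt_rpow_const (Or.inl hx.ne')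
    have hev : (fun t : ℝ => |t| ^ c) =ᶠ[𝓝 x] fun t : ℝ => t ^ c := by
      filter_upwards [eventually_gt_nhds hx] with t ht
      rw [abs_of_pos ht]
    have heq : c * x ^ (c - 1) = c * (|x| ^ (c - 2) * x) := by
      rw [abs_of_pos hx, show c - 1 = c - 2 + 1 by ring, Real.rpow_add hx,
        Real.rpow_one]
    exact heq ▸ h1.congr_of_eventuallyEq hev

set_option maxHeartbeats 2000000 in
/-- `u'(r)/u(r) ≥ -(p/((p-1)(q+1))) Θ(r)^{-1}`; equivalently
`-u'(r) Θ(r) ≤ (p/((p-1)(q+1))) u(r)`. -/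
theorem statement_12 (n : ℕ) (hn : 2 ≤ n) (p q : ℝ) (hp1 : 1 < p) (hpn : p < n)
    (hq : (n : ℝ) * p / ((n : ℝ) - p) - 1 ≤ q)
    (ψ : ℝ → ℝ) (hψ : IsCHModel ψ) (α : ℝ) (hα : 0 < α)
    (u : ℝ → ℝ) (hu : IsRadialSolution n p q ψ ⊤ α u) :
    ∀ r : ℝ, 0 < r →
      -(p / ((p - 1) * (q + 1))) / Theta n ψ r ≤ deriv u r / u r ∧
        -deriv u r * Theta n ψ r ≤ p / ((p - 1) * (q + 1)) * u r := by
  obtain ⟨hsm, hψ0, hψ'0, hconv, hψpos⟩ := hψ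
  have hp0 : (0:ℝ) < p := by linarith
  have hp1' : (0:ℝ) < p - 1 := by linarith
  have hn1 : (1:ℝ) < n := by
    have : (2:ℝ) ≤ n := by exact_mod_cast hn
    linarith
  have hnp : (0:ℝ) < (n:ℝ) - p := by linarith
  have hfrac : (1:ℝ) < (n:ℝ) * p / ((n:ℝ) - p) := by
    rw [lt_div_iff₀ hnp]; nlinarith
  have hq1 : (1:ℝ) < q + 1 := by linarith
  have hq0 : (0:ℝ) < q + 1 := by linarith
  have hc : (p-1)/p + 1/(q+1) ≤ ((n:ℝ)-1)/(n:ℝ) := by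
    have hqc : 1/(q+1) ≤ ((n:ℝ)-p)/((n:ℝ)*p) := by
      rw [div_le_div_iff₀ hq0 (by positivity)]
      have h2 : (n:ℝ)*p/((n:ℝ)-p) ≤ q + 1 := by linarith
      calc 1 * ((n:ℝ)*p) = ((n:ℝ)-p) * ((n:ℝ)*p/((n:ℝ)-p)) := by field_simp
        _ ≤ ((n:ℝ)-p) * (q+1) := by nlinarith
    have heq : (p-1)/p + ((n:ℝ)-p)/((n:ℝ)*p) = ((n:ℝ)-1)/(n:ℝ) := by
      field_simp; ring
    linarith
  -- ψ facts
  have hψd : Differentiable ℝ ψ := hsm.differentiable (by simp)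
  have hψ'cd : ContDiff ℝ (⊤ : ℕ∞) (deriv ψ) :=
    (contDiff_infty_iff_deriv.mp (hsm.of_le (by simp))).2
  have hψ'mono : MonotoneOn (deriv ψ) (Set.Ici (0:ℝ)) := by
    apply monotoneOn_of_deriv_nonneg (convex_Ici 0) hψ'cd.continuous.continuousOn
      (hψ'cd.differentiable (by simp)).differentiableOn
    intro x hx
    rw [interior_Ici] at hx
    exact hconv x (le_of_lt hx)
  have hψ'1 : ∀ x : ℝ, 0 ≤ x → 1 ≤ deriv ψ x := by
    intro x hx
    have := hψ'mono Set.self_mem_Ici hx hx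
    rwa [hψ'0] at this
  -- V facts
  have hΨcont : Continuous (fun s : ℝ => ψ s ^ (n-1)) := hψd.continuous.pow _
  have hVd : ∀ x : ℝ, HasDerivAt (fun y : ℝ => ∫ s in (0:ℝ)..y, ψ s ^ (n-1))
      (ψ x ^ (n-1)) x := fun x =>
    intervalIntegral.integral_hasDerivAt_right (hΨcont.intervalIntegrable _ _)
      (hΨcont.stronglyMeasurableAtFilter _ _) hΨcont.continuousAt
  have hVcont : Continuous (fun y : ℝ => ∫ s in (0:ℝ)..y, ψ s ^ (n-1)) := by
    rw [continuous_iff_continuousAt]; exact fun x => (hVd x).continuousAt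
  have hΨpos : ∀ x : ℝ, 0 < x → 0 < ψ x ^ (n-1) := fun x hx => pow_pos (hψpos x hx) _
  have hVpos : ∀ x : ℝ, 0 < x → 0 < ∫ s in (0:ℝ)..x, ψ s ^ (n-1) := fun x hx =>
    intervalIntegral.intervalIntegral_pos_of_pos_on (hΨcont.intervalIntegrable _ _)
      (fun s hs => hΨpos s hs.1) hx
  -- key convexity inequality
  have hkey : ∀ r : ℝ, 0 < r →
      ψ r ^ n / n ≤ deriv ψ r * ∫ s in (0:ℝ)..r, ψ s ^ (n-1) := by
    intro r hr
    have hGd : ∀ s : ℝ, HasDerivAt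
        (fun t : ℝ => deriv ψ r * (∫ σ in (0:ℝ)..t, ψ σ ^ (n-1)) - ψ t ^ n / n)
        (deriv ψ r * ψ s ^ (n-1) - ψ s ^ (n-1) * deriv ψ s) s := by
      intro s
      have h1 : HasDerivAt (fun t => ψ t ^ n) ((n:ℝ) * ψ s ^ (n-1) * deriv ψ s) s :=
        (hψd s).hasDerivAt.pow n
      have h2 := h1.div_const (n : ℝ)
      have h3 : (n:ℝ) * ψ s ^ (n-1) * deriv ψ s / n = ψ s ^ (n-1) * deriv ψ s := by
        field_simp
      rw [h3] at h2
      exact ((hVd s).const_mul _).sub h2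
    have hmono : MonotoneOn
        (fun t : ℝ => deriv ψ r * (∫ σ in (0:ℝ)..t, ψ σ ^ (n-1)) - ψ t ^ n / n)
        (Set.Icc 0 r) := by
      apply monotoneOn_of_deriv_nonneg (convex_Icc 0 r)
        (fun x _ => (hGd x).continuousAt.continuousWithinAt)
        (fun x hx => (hGd x).differentiableAt.differentiableWithinAt)
      intro x hx
      rw [interior_Icc] at hx
      rw [(hGd x).deriv]
      have h4 : deriv ψ x ≤ deriv ψ r :=
        hψ'mono (Set.mem_Ici.mpr hx.1.le) (Set.mem_Ici.mpr hr.le) hx.2.le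
      have h5 : (0:ℝ) ≤ ψ x ^ (n-1) := (hΨpos x hx.1).le
      nlinarith
    have h6 := hmono (Set.left_mem_Icc.mpr hr.le) (Set.right_mem_Icc.mpr hr.le) hr.le
    simp only [intervalIntegral.integral_same, hψ0, mul_zero,
      zero_pow (show n ≠ 0 by omega), zero_div, sub_zero, zero_sub] at h6
    linarith [h6]
  -- solution facts
  have hTop : ∀ x : ℝ, ENNReal.ofReal x < (⊤ : ℝ≥0∞) := fun x => ENNReal.ofReal_lt_top
  have hset : {x : ℝ | 0 ≤ x ∧ ENNReal.ofReal x < (⊤ : ℝ≥0∞)} = Set.Ici (0:ℝ) := by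
    ext x; simp
  have hu'cont : ContinuousOn (deriv u) (Set.Ici (0:ℝ)) := by
    have h := hu.deriv_cont
    rwa [hset] at h
  have hud : ∀ x : ℝ, 0 ≤ x → DifferentiableAt ℝ u x := fun x hx => hu.diff x hx (hTop x)
  have hupos : ∀ x : ℝ, 0 ≤ x → 0 < u x := fun x hx => hu.pos x hx (hTop x)
  have hucont : ContinuousOn u (Set.Ici (0:ℝ)) := fun x hx =>
    (hud x hx).continuousAt.continuousWithinAt
  have hZd : ∀ x : ℝ, 0 < x →
      HasDerivAt (fun s => ψ s ^ (n-1) * |deriv u s| ^ (p - 2) * deriv u s)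
        (-(ψ x ^ (n-1) * u x ^ q)) x := fun x hx => hu.eqn x hx (hTop x)
  have hZcont : ContinuousOn
      (fun s => ψ s ^ (n-1) * |deriv u s| ^ (p - 2) * deriv u s) (Set.Ici (0:ℝ)) := by
    have h1 : ContinuousOn (fun s => |deriv u s| ^ (p-2) * deriv u s) (Set.Ici (0:ℝ)) := by
      have := (gp_continuous hp1).comp_continuousOn hu'cont
      exact this
    have h2 := (hΨcont.continuousOn.mul h1)
    simpa [mul_assoc, Pi.mul_def] using h2
  -- continuity of P
  have hFcont : ContinuousOn (energyF p q u) (Set.Ici (0:ℝ)) := by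
    unfold energyF
    apply ContinuousOn.add
    · exact ((hu'cont.abs.rpow_const (fun x _ => Or.inr hp0.le)).const_smul
        ((p-1)/p) : _)
    · exact (hucont.rpow_const (fun x _ => Or.inr hq0.le)).div_const _
  have hPalt : pohozaevP n p q ψ u = fun s =>
      (∫ σ in (0:ℝ)..s, ψ σ ^ (n-1)) * energyF p q u s +
        (ψ s ^ (n-1) * |deriv u s| ^ (p - 2) * deriv u s) * u s / (q+1) := by
    funext s
    unfold pohozaevP
    ring
  have hPcont : ContinuousOn (pohozaevP n p q ψ u) (Set.Ici (0:ℝ)) := by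
    rw [hPalt]
    exact (hVcont.continuousOn.mul hFcont).add ((hZcont.mul hucont).div_const _)
  -- derivative of P
  have hp'1 : 1 < p/(p-1) := by
    rw [lt_div_iff₀ hp1']; linarith
  have hPd : ∀ r : ℝ, 0 < r →
      HasDerivAt (pohozaevP n p q ψ u)
        (|deriv u r| ^ p * (((p-1)/p + 1/(q+1)) * ψ r ^ (n-1) -
          (∫ σ in (0:ℝ)..r, ψ σ ^ (n-1)) *
            (((n-1 : ℕ):ℝ) * ψ r ^ (n-1-1) * deriv ψ r) / ψ r ^ (n-1))) r := by
    intro r hr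
    have hψr : 0 < ψ r := hψpos r hr
    have hΨr : (0:ℝ) < ψ r ^ (n-1) := hΨpos r hr
    have hur : 0 < u r := hupos r hr.le
    have hu'r : HasDerivAt u (deriv u r) r := (hud r hr.le).hasDerivAt
    have hΨd : HasDerivAt (fun s : ℝ => ψ s ^ (n-1))
        (((n-1 : ℕ):ℝ) * ψ r ^ (n-1-1) * deriv ψ r) r := (hψd r).hasDerivAt.pow (n-1)
    have hvd : HasDerivAt
        (fun s => (ψ s ^ (n-1) * |deriv u s| ^ (p - 2) * deriv u s) / ψ s ^ (n-1))
        ((-(ψ r ^ (n-1) * u r ^ q) * ψ r ^ (n-1) -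
          (ψ r ^ (n-1) * |deriv u r| ^ (p - 2) * deriv u r) *
            (((n-1 : ℕ):ℝ) * ψ r ^ (n-1-1) * deriv ψ r)) / (ψ r ^ (n-1)) ^ 2) r :=
      (hZd r hr).div hΨd hΨr.ne'
    have habs := abs_rpow_hasDerivAt hp'1
      ((ψ r ^ (n-1) * |deriv u r| ^ (p - 2) * deriv u r) / ψ r ^ (n-1))
    have hcomp := habs.comp r hvd
    have hcomp' : HasDerivAt
        (fun s => |(ψ s ^ (n-1) * |deriv u s| ^ (p - 2) * deriv u s) / ψ s ^ (n-1)|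
          ^ (p/(p-1)))
        (p/(p-1) * (|(ψ r ^ (n-1) * |deriv u r| ^ (p - 2) * deriv u r) / ψ r ^ (n-1)|
            ^ (p/(p-1) - 2) *
          ((ψ r ^ (n-1) * |deriv u r| ^ (p - 2) * deriv u r) / ψ r ^ (n-1))) *
         ((-(ψ r ^ (n-1) * u r ^ q) * ψ r ^ (n-1) -
          (ψ r ^ (n-1) * |deriv u r| ^ (p - 2) * deriv u r) *
            (((n-1 : ℕ):ℝ) * ψ r ^ (n-1-1) * deriv ψ r)) / (ψ r ^ (n-1)) ^ 2)) r := by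
      exact hcomp
    have hpow : HasDerivAt (fun s => u s ^ (q+1))
        (deriv u r * (q+1) * u r ^ (q+1-1)) r := hu'r.rpow_const (Or.inl hur.ne')
    have hFev : energyF p q u =ᶠ[𝓝 r] fun s =>
        (p-1)/p * |(ψ s ^ (n-1) * |deriv u s| ^ (p - 2) * deriv u s) / ψ s ^ (n-1)|
          ^ (p/(p-1)) + u s ^ (q+1) / (q+1) := by
      filter_upwards [eventually_gt_nhds hr] with s hs
      have hΨs : (ψ s ^ (n-1) : ℝ) ≠ 0 := (hΨpos s hs).ne'
      have hZs : (ψ s ^ (n-1) * |deriv u s| ^ (p - 2) * deriv u s) / ψ s ^ (n-1)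
          = |deriv u s| ^ (p-2) * deriv u s := by
        rw [mul_assoc, mul_div_cancel_left₀ _ hΨs]
      rw [energyF, hZs, gp_pow hp1]
    have hFd : HasDerivAt (energyF p q u)
        ((p-1)/p * (p/(p-1) *
          (|(ψ r ^ (n-1) * |deriv u r| ^ (p - 2) * deriv u r) / ψ r ^ (n-1)|
            ^ (p/(p-1) - 2) *
          ((ψ r ^ (n-1) * |deriv u r| ^ (p - 2) * deriv u r) / ψ r ^ (n-1))) *
         ((-(ψ r ^ (n-1) * u r ^ q) * ψ r ^ (n-1) -
          (ψ r ^ (n-1) * |deriv u r| ^ (p - 2) * deriv u r) *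
            (((n-1 : ℕ):ℝ) * ψ r ^ (n-1-1) * deriv ψ r)) / (ψ r ^ (n-1)) ^ 2)) +
         (deriv u r * (q+1) * u r ^ (q+1-1)) / (q+1)) r :=
      ((hcomp'.const_mul ((p-1)/p)).add (hpow.div_const (q+1))).congr_of_eventuallyEq
        hFev
    have hPd' := (((hVd r).mul hFd).add
      (((hZd r hr).mul hu'r).div_const (q+1)))
    rw [hPalt]
    refine hPd'.congr_deriv ?_
    -- algebraic identity
    have hZr : (ψ r ^ (n-1) * |deriv u r| ^ (p - 2) * deriv u r) / ψ r ^ (n-1)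
        = |deriv u r| ^ (p-2) * deriv u r := by
      rw [mul_assoc, mul_div_cancel_left₀ _ hΨr.ne']
    rw [hZr, gp_inv hp1, energyF, add_sub_cancel_right,
      Real.rpow_add_one hur.ne' q, ← gp_mul_self hp1 (deriv u r)]
    field_simp
    ring
  -- K is nonpositive
  have hKK : ∀ r : ℝ, 0 < r →
      ((p-1)/p + 1/(q+1)) * ψ r ^ (n-1) -
        (∫ σ in (0:ℝ)..r, ψ σ ^ (n-1)) *
          (((n-1 : ℕ):ℝ) * ψ r ^ (n-1-1) * deriv ψ r) / ψ r ^ (n-1) ≤ 0 := by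
    intro r hr
    have hψr : 0 < ψ r := hψpos r hr
    have hΨr : (0:ℝ) < ψ r ^ (n-1) := hΨpos r hr
    have h1 := hkey r hr
    have hcast : ((n-1 : ℕ):ℝ) = (n:ℝ) - 1 := by
      rw [Nat.cast_sub (by omega)]; norm_num
    rw [sub_nonpos, le_div_iff₀ hΨr, hcast]
    have hpow2 : ψ r ^ (n-1) * ψ r ^ (n-1) = ψ r ^ (n-2) * ψ r ^ n := by
      rw [← pow_add, ← pow_add]; congr 1; omega
    have hΨ'e : ψ r ^ (n-1-1) = ψ r ^ (n-2) := by congr 1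
    have hVr := (hVpos r hr).le
    calc ((p-1)/p + 1/(q+1)) * ψ r ^ (n-1) * ψ r ^ (n-1)
        = ((p-1)/p + 1/(q+1)) * (ψ r ^ (n-2) * ψ r ^ n) := by
          rw [mul_assoc, hpow2]
      _ ≤ ((n:ℝ)-1)/n * (ψ r ^ (n-2) * ψ r ^ n) :=
          mul_le_mul_of_nonneg_right hc (by positivity)
      _ = (((n:ℝ)-1) * ψ r ^ (n-2)) * (ψ r ^ n / n) := by
          field_simp
      _ ≤ (((n:ℝ)-1) * ψ r ^ (n-2)) *
            (deriv ψ r * ∫ σ in (0:ℝ)..r, ψ σ ^ (n-1)) := by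
          apply mul_le_mul_of_nonneg_left h1
          have : (0:ℝ) ≤ (n:ℝ) - 1 := by linarith
          positivity
      _ = (∫ σ in (0:ℝ)..r, ψ σ ^ (n-1)) * (((n:ℝ)-1) * ψ r ^ (n-1-1) * deriv ψ r) := by
          rw [hΨ'e]; ring
  -- P is nonpositive
  have hP0 : pohozaevP n p q ψ u 0 = 0 := by
    unfold pohozaevP
    simp [hψ0, zero_pow (show n - 1 ≠ 0 by omega)]
  have hPle : ∀ r : ℝ, 0 < r → pohozaevP n p q ψ u r ≤ 0 := by
    intro r hr
    have hanti : AntitoneOn (pohozaevP n p q ψ u) (Set.Icc 0 r) := by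
      apply antitoneOn_of_deriv_nonpos (convex_Icc 0 r)
        (hPcont.mono Set.Icc_subset_Ici_self)
      · intro x hx
        rw [interior_Icc] at hx
        exact (hPd x hx.1).differentiableAt.differentiableWithinAt
      · intro x hx
        rw [interior_Icc] at hx
        rw [(hPd x hx.1).deriv]
        exact mul_nonpos_of_nonneg_of_nonpos
          (Real.rpow_nonneg (abs_nonneg _) _) (hKK x hx.1)
    have h := hanti (Set.left_mem_Icc.mpr hr.le) (Set.right_mem_Icc.mpr hr.le) hr.le
    rwa [hP0] at h
  -- conclusion
  intro r hr
  have hψr : 0 < ψ r := hψpos r hr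
  have hΨr : (0:ℝ) < ψ r ^ (n-1) := hΨpos r hr
  have hur : 0 < u r := hupos r hr.le
  have hVr : 0 < ∫ σ in (0:ℝ)..r, ψ σ ^ (n-1) := hVpos r hr
  have hΘ : 0 < Theta n ψ r := div_pos hVr hΨr
  have hΘeq : Theta n ψ r = (∫ σ in (0:ℝ)..r, ψ σ ^ (n-1)) / ψ r ^ (n-1) := rfl
  have main : -deriv u r * Theta n ψ r ≤ p / ((p - 1) * (q + 1)) * u r := by
    rcases le_or_gt 0 (deriv u r) with ha | ha
    · have h1 : -deriv u r * Theta n ψ r ≤ 0 :=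
        mul_nonpos_of_nonpos_of_nonneg (neg_nonpos.mpr ha) hΘ.le
      have h2 : (0:ℝ) < p / ((p - 1) * (q + 1)) * u r := by positivity
      linarith
    · have hP := hPle r hr
      unfold pohozaevP energyF at hP
      have hane : deriv u r ≠ 0 := ha.ne
      have haabs : (0:ℝ) < |deriv u r| := abs_pos.mpr hane
      set a := deriv u r with hadef
      have hB : 0 < |a| ^ (p-1) := Real.rpow_pos_of_pos haabs _
      have hX : |a| ^ (p-2) * a = -(|a| ^ (p-1)) := by
        have hXneg : |a| ^ (p-2) * a < 0 :=
          mul_neg_of_pos_of_neg (Real.rpow_pos_of_pos haabs _) ha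
        have := gp_abs hp1 a
        rw [abs_of_neg hXneg] at this
        linarith
      have hap : |a| ^ p = |a| ^ (p-1) * (-a) := by
        have hpe : p = (p-1) + 1 := by ring
        calc |a| ^ p = |a| ^ ((p-1) + 1) := by rw [← hpe]
          _ = |a| ^ (p-1) * |a| := Real.rpow_add_one (abs_ne_zero.mpr hane) _
          _ = |a| ^ (p-1) * (-a) := by congr 1; exact abs_of_neg ha
      rw [hX, hap] at hP
      -- hP : V * ((p-1)/p * (B * (-a)) + u^{q+1}/(q+1)) + Ψ/(q+1) * (-B * u) ≤ 0
      have hdrop : ((∫ σ in (0:ℝ)..r, ψ σ ^ (n-1)) * ((p-1)/p) * (-a)) * |a| ^ (p-1)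
          ≤ (ψ r ^ (n-1) * u r / (q+1)) * |a| ^ (p-1) := by
        have hnn : (0:ℝ) ≤ (∫ σ in (0:ℝ)..r, ψ σ ^ (n-1)) * (u r ^ (q+1) / (q+1)) :=
          mul_nonneg hVr.le (div_nonneg (Real.rpow_nonneg hur.le _) hq0.le)
        have hPe : (∫ σ in (0:ℝ)..r, ψ σ ^ (n-1)) *
              ((p-1)/p * (|a| ^ (p-1) * -a) + u r ^ (q+1)/(q+1)) +
              ψ r ^ (n-1)/(q+1) * (-(|a| ^ (p-1)) * u r)
            = ((∫ σ in (0:ℝ)..r, ψ σ ^ (n-1)) * ((p-1)/p) * (-a)) * |a| ^ (p-1)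
              + (∫ σ in (0:ℝ)..r, ψ σ ^ (n-1)) * (u r ^ (q+1) / (q+1))
              - (ψ r ^ (n-1) * u r / (q+1)) * |a| ^ (p-1) := by ring
        rw [hPe] at hP
        linarith [hnn]
      have key1 := le_of_mul_le_mul_right hdrop hB
      have key1' : ((∫ σ in (0:ℝ)..r, ψ σ ^ (n-1)) * (p-1) * (-a)) / p
          ≤ (ψ r ^ (n-1) * u r) / (q+1) := by
        have he : ((∫ σ in (0:ℝ)..r, ψ σ ^ (n-1)) * (p-1) * (-a)) / p
            = (∫ σ in (0:ℝ)..r, ψ σ ^ (n-1)) * ((p-1)/p) * (-a) := by ring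
        rw [he]; exact key1
      rw [div_le_div_iff₀ hp0 hq0] at key1'
      -- key1' : V * (p-1) * (-a) * (q+1) ≤ ψ^{n-1} * u * p
      rw [hΘeq, show -a * ((∫ σ in (0:ℝ)..r, ψ σ ^ (n-1)) / ψ r ^ (n-1))
          = (-a * (∫ σ in (0:ℝ)..r, ψ σ ^ (n-1))) / ψ r ^ (n-1) by ring,
        div_le_iff₀ hΨr,
        show p / ((p - 1) * (q + 1)) * u r * ψ r ^ (n-1)
          = (p * u r * ψ r ^ (n-1)) / ((p-1) * (q+1)) by ring,
        le_div_iff₀ (by positivity)]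
      linarith [key1']
  refine ⟨?_, main⟩
  rw [div_le_div_iff₀ hΘ hur]
  linarith [main]
end

section
/- Let ψ be a Cartan–Hadamard model function such that either (a) there exist γ ∈ [0,1) and ℓ ∈ (0,∞) with lim_{r→∞} r^γ·ψ′(r)/ψ(r) = ℓ, or (b) lim_{r→∞} ψ′(r)/ψ(r) = +∞ and lim_{r→∞} (ψ(r)/ψ′(r))·(d/dr) log(ψ′(r)/ψ(r)) = 0. Then lim_{r→∞} ψ(r)^{n−1} / ((ψ′(r)/ψ(r))·∫₀ʳ ψ(s)^{n−1} ds) = n−1; equivalently, lim_{r→∞} Θ(r)·ψ′(r)/ψ(r) = 1/(n−1). -/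
open Real Filter MeasureTheory
open scoped ENNReal Topology

section Aux
open scoped ContDiff
lemma lhopital_inf {f g f' g' : ℝ → ℝ} {L : ℝ} (a : ℝ)
    (hf : ∀ x, a ≤ x → HasDerivAt f (f' x) x)
    (hg : ∀ x, a ≤ x → HasDerivAt g (g' x) x)
    (hf'c : ContinuousOn f' (Set.Ici a)) (hg'c : ContinuousOn g' (Set.Ici a))
    (hg'pos : ∀ x, a ≤ x → 0 < g' x)
    (hgtop : Tendsto g atTop atTop)
    (hlim : Tendsto (fun x => f' x / g' x) atTop (𝓝 L)) :
    Tendsto (fun x => f x / g x) atTop (𝓝 L) := by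
  rw [Metric.tendsto_atTop]
  intro ε hε
  set δ := ε / 3 with hδdef
  have hδ : 0 < δ := by positivity
  -- choose b ≥ a with |f'/g' - L| < δ for x ≥ b
  have h1 : ∀ᶠ x in atTop, |f' x / g' x - L| < δ := by
    obtain ⟨N, hN⟩ := Metric.tendsto_atTop.1 hlim δ hδ
    filter_upwards [eventually_ge_atTop N] with x hx
    simpa [Real.dist_eq] using hN x hx
  obtain ⟨b, hb⟩ := ((h1.and (eventually_ge_atTop a)).and (eventually_ge_atTop 0)).exists_forall_of_atTop
  have hba : a ≤ b := (hb b le_rfl).1.2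
  -- key integral bounds for r ≥ b
  have key : ∀ r, b ≤ r →
      (L - δ) * (g r - g b) ≤ f r - f b ∧ f r - f b ≤ (L + δ) * (g r - g b) := by
    intro r hr
    have hsub : Set.uIcc b r ⊆ Set.Ici a := by
      rw [Set.uIcc_of_le hr]
      intro x hx; exact le_trans hba hx.1
    have hfint : ∫ x in b..r, f' x = f r - f b :=
      intervalIntegral.integral_eq_sub_of_hasDerivAt
        (fun x hx => hf x (hsub hx)) ((hf'c.mono hsub).intervalIntegrable)
    have hgint : ∫ x in b..r, g' x = g r - g b :=
      intervalIntegral.integral_eq_sub_of_hasDerivAt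
        (fun x hx => hg x (hsub hx)) ((hg'c.mono hsub).intervalIntegrable)
    have hptwise : ∀ x ∈ Set.Icc b r, (L - δ) * g' x ≤ f' x ∧ f' x ≤ (L + δ) * g' x := by
      intro x hx
      have hxb : b ≤ x := hx.1
      have hgx : 0 < g' x := hg'pos x (le_trans hba hxb)
      have := (hb x hxb).1.1
      rw [abs_lt] at this
      constructor
      · have := this.1
        rw [lt_sub_iff_add_lt, lt_div_iff₀ hgx] at this
        linarith
      · have := this.2
        rw [sub_lt_iff_lt_add, div_lt_iff₀ hgx] at this
        linarith
    have hfi : IntervalIntegrable f' volume b r := (hf'c.mono hsub).intervalIntegrable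
    have hgi : IntervalIntegrable g' volume b r := (hg'c.mono hsub).intervalIntegrable
    constructor
    · calc (L - δ) * (g r - g b) = ∫ x in b..r, (L - δ) * g' x := by
            rw [intervalIntegral.integral_const_mul, hgint]
        _ ≤ ∫ x in b..r, f' x :=
            intervalIntegral.integral_mono_on hr (hgi.const_mul _) hfi
              (fun x hx => (hptwise x hx).1)
        _ = f r - f b := hfint
    · calc f r - f b = ∫ x in b..r, f' x := hfint.symm
        _ ≤ ∫ x in b..r, (L + δ) * g' x :=
            intervalIntegral.integral_mono_on hr hfi (hgi.const_mul _)
              (fun x hx => (hptwise x hx).2)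
        _ = (L + δ) * (g r - g b) := by
            rw [intervalIntegral.integral_const_mul, hgint]
  -- constants
  set C₁ := f b - (L + δ) * g b with hC1
  set C₂ := f b - (L - δ) * g b with hC2
  set M := max (|C₁| / δ) (|C₂| / δ) with hM
  have hev : ∀ᶠ r in atTop, max M 1 < g r := hgtop.eventually_gt_atTop _
  obtain ⟨c, hc⟩ := (hev.and (eventually_ge_atTop b)).exists_forall_of_atTop
  refine ⟨c, fun r hr => ?_⟩
  have hgr : max M 1 < g r := (hc r hr).1
  have hgpos : 0 < g r := lt_of_lt_of_le (lt_of_lt_of_le one_pos (le_max_right M 1)) hgr.le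
  have hrb : b ≤ r := (hc r hr).2
  obtain ⟨hlo, hhi⟩ := key r hrb
  rw [Real.dist_eq, abs_lt]
  have hMr : M < g r := lt_of_le_of_lt (le_max_left M 1) hgr
  have hC1b : |C₁| ≤ δ * g r := by
    have : |C₁| / δ ≤ M := le_max_left _ _
    calc |C₁| = |C₁| / δ * δ := by field_simp
      _ ≤ M * δ := by nlinarith
      _ ≤ δ * g r := by nlinarith
  have hC2b : |C₂| ≤ δ * g r := by
    have : |C₂| / δ ≤ M := le_max_right _ _
    calc |C₂| = |C₂| / δ * δ := by field_simp
      _ ≤ M * δ := by nlinarith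
      _ ≤ δ * g r := by nlinarith
  have hC1' := abs_le.1 hC1b
  have hC2' := abs_le.1 hC2b
  constructor
  · have : f r ≥ (L - δ) * g r + C₂ := by rw [hC2]; nlinarith
    have h3 : f r / g r ≥ L - δ + C₂ / g r := by
      rw [ge_iff_le, ← sub_nonneg] at this ⊢
      have := div_nonneg this hgpos.le
      rw [sub_div, add_div, mul_div_assoc, div_self hgpos.ne', mul_one] at this
      linarith
    have h4 : C₂ / g r ≥ -δ := by
      rw [ge_iff_le, le_div_iff₀ hgpos]
      nlinarith [hC2'.1]
    have : ε = 3 * δ := by rw [hδdef]; ring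
    linarith
  · have : f r ≤ (L + δ) * g r + C₁ := by rw [hC1]; nlinarith
    have h3 : f r / g r ≤ L + δ + C₁ / g r := by
      rw [← sub_nonneg] at this ⊢
      have := div_nonneg this hgpos.le
      rw [sub_div, add_div, mul_div_assoc, div_self hgpos.ne', mul_one] at this
      linarith
    have h4 : C₁ / g r ≤ δ := by
      rw [div_le_iff₀ hgpos]
      nlinarith [hC1'.2]
    have : ε = 3 * δ := by rw [hδdef]; ring
    linarith


variable {ψ : ℝ → ℝ}


lemma CH.diff (hψ : IsCHModel ψ) : Differentiable ℝ ψ := hψ.1.differentiable (by simp)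

lemma CH.contDeriv (hψ : IsCHModel ψ) : ContDiff ℝ ∞ (deriv ψ) := (contDiff_infty_iff_deriv.mp (hψ.1.of_le (by simp))).2

lemma CH.diffDeriv (hψ : IsCHModel ψ) : Differentiable ℝ (deriv ψ) := (CH.contDeriv hψ).differentiable (by simp)

lemma CH.monoDeriv (hψ : IsCHModel ψ) : MonotoneOn (deriv ψ) (Set.Ici 0) := by
  apply monotoneOn_of_deriv_nonneg (convex_Ici 0)
    ((CH.diffDeriv hψ).continuous.continuousOn)
    ((CH.diffDeriv hψ).differentiableOn)
  intro x hx
  rw [interior_Ici] at hx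
  exact hψ.2.2.2.1 x (le_of_lt hx)

lemma CH.contD2 (hψ : IsCHModel ψ) : Continuous (deriv (deriv ψ)) :=
  ((contDiff_infty_iff_deriv.mp (CH.contDeriv hψ)).2).continuous

lemma CH.one_le_deriv (hψ : IsCHModel ψ) : ∀ r : ℝ, 0 ≤ r → 1 ≤ deriv ψ r := by
  intro r hr
  have := CH.monoDeriv hψ (Set.mem_Ici.2 le_rfl) hr hr
  rwa [hψ.2.2.1] at this

lemma CH.le_self (hψ : IsCHModel ψ) : ∀ r : ℝ, 0 ≤ r → r ≤ ψ r := by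
  intro r hr
  have hmono : MonotoneOn (fun r => ψ r - r) (Set.Ici 0) := by
    apply monotoneOn_of_deriv_nonneg (convex_Ici 0)
      (((CH.diff hψ).continuous.sub continuous_id).continuousOn)
      (((CH.diff hψ).sub differentiable_id).differentiableOn)
    intro x hx
    rw [interior_Ici] at hx
    have : deriv (fun r => ψ r - id r) x = deriv ψ x - 1 := by
      have := ((CH.diff hψ x).hasDerivAt.sub (hasDerivAt_id x)).deriv
      exact this
    rw [show (ψ - id) = (fun r => ψ r - id r) from rfl, this]
    linarith [CH.one_le_deriv hψ x hx.le]
  have := hmono (Set.mem_Ici.2 le_rfl) hr hr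
  simp only [hψ.2.1] at this
  linarith


lemma caseA (n : ℕ) (hn : 2 ≤ n) (hψ : IsCHModel ψ)
    {γ ℓ : ℝ} (hγ0 : 0 ≤ γ) (hγ1 : γ < 1) (hℓ : 0 < ℓ)
    (hA : Tendsto (fun r : ℝ => r ^ γ * deriv ψ r / ψ r) atTop (𝓝 ℓ)) :
    Tendsto (fun r : ℝ => (∫ s in (0:ℝ)..r, ψ s ^ (n - 1)) /
      (r ^ γ * ψ r ^ (n - 1))) atTop (𝓝 (((n : ℝ) - 1) * ℓ)⁻¹) := by
  have hcont : Continuous fun s => ψ s ^ (n - 1) := ((CH.diff hψ).continuous).pow _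
  set V : ℝ → ℝ := fun r => ∫ s in (0:ℝ)..r, ψ s ^ (n - 1) with hV
  have hVd : ∀ r : ℝ, HasDerivAt V (ψ r ^ (n - 1)) r := fun r =>
    (hcont.integral_hasStrictDerivAt 0 r).hasDerivAt
  set g : ℝ → ℝ := fun r => r ^ γ * ψ r ^ (n - 1) with hg
  set g' : ℝ → ℝ := fun r =>
    γ * r ^ (γ - 1) * ψ r ^ (n - 1) +
      r ^ γ * ((n - 1 : ℕ) * ψ r ^ (n - 1 - 1) * deriv ψ r) with hg'
  have hgd : ∀ x : ℝ, (1:ℝ) ≤ x → HasDerivAt g (g' x) x := by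
    intro x hx
    have h1 : HasDerivAt (fun r : ℝ => r ^ γ) (γ * x ^ (γ - 1)) x :=
      Real.hasDerivAt_rpow_const (Or.inl (by positivity))
    have h2 : HasDerivAt (fun r => ψ r ^ (n - 1))
        ((n - 1 : ℕ) * ψ x ^ (n - 1 - 1) * deriv ψ x) x :=
      ((CH.diff hψ x).hasDerivAt).pow _
    exact h1.mul h2
  have hψpos : ∀ x : ℝ, (1:ℝ) ≤ x → 0 < ψ x := fun x hx => hψ.2.2.2.2 x (by linarith)
  have hdpos : ∀ x : ℝ, (1:ℝ) ≤ x → 0 < deriv ψ x := fun x hx =>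
    lt_of_lt_of_le one_pos (CH.one_le_deriv hψ x (by linarith))
  have hg'pos : ∀ x : ℝ, (1:ℝ) ≤ x → 0 < g' x := by
    intro x hx
    have h0 : (0:ℝ) < x := by linarith
    have hn1 : (1:ℝ) ≤ (n - 1 : ℕ) := by
      have : 1 ≤ n - 1 := by omega
      exact_mod_cast this
    have := hψpos x hx; have := hdpos x hx
    have hx1 : (0:ℝ) < x ^ γ := Real.rpow_pos_of_pos h0 γ
    have hx2 : (0:ℝ) ≤ γ * x ^ (γ - 1) * ψ x ^ (n - 1) := by positivity
    have hx3 : (0:ℝ) < x ^ γ * ((n - 1 : ℕ) * ψ x ^ (n - 1 - 1) * deriv ψ x) := by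
      apply mul_pos hx1
      have hp : (0:ℝ) < ψ x ^ (n - 1 - 1) := by positivity
      exact mul_pos (mul_pos (lt_of_lt_of_le one_pos hn1) hp) ‹0 < deriv ψ x›
    simp only [hg']
    linarith
  have hg'cont : ContinuousOn g' (Set.Ici 1) := by
    apply ContinuousOn.add
    · apply ContinuousOn.mul
      · apply ContinuousOn.mul continuousOn_const
        apply ContinuousOn.rpow_const continuousOn_id
        intro x hx
        exact Or.inl (by simp at hx; positivity)
      · exact hcont.continuousOn
    · apply ContinuousOn.mul
      · apply ContinuousOn.rpow_const continuousOn_id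
        intro x hx
        exact Or.inl (by simp at hx; positivity)
      · exact (continuous_const.mul ((CH.diff hψ).continuous.pow _) |>.mul
          (CH.diffDeriv hψ).continuous).continuousOn
  have hgtop : Tendsto g atTop atTop := by
    apply tendsto_atTop_mono' atTop _ tendsto_id
    filter_upwards [eventually_ge_atTop (1:ℝ)] with x hx
    have h0 : (0:ℝ) < x := by linarith
    have h1 : (1:ℝ) ≤ x ^ γ := Real.one_le_rpow hx hγ0
    have h2 : x ≤ ψ x ^ (n - 1) := by
      calc x = x ^ 1 := (pow_one x).symm
        _ ≤ x ^ (n - 1) := pow_le_pow_right₀ hx (by omega)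
        _ ≤ ψ x ^ (n - 1) := pow_le_pow_left₀ h0.le (CH.le_self hψ x h0.le) _
    calc (x:ℝ) = 1 * x := (one_mul x).symm
      _ ≤ x ^ γ * ψ x ^ (n - 1) := by nlinarith
  have hratio : Tendsto (fun x => ψ x ^ (n - 1) / g' x) atTop (𝓝 (((n:ℝ) - 1) * ℓ)⁻¹) := by
    have heq : ∀ᶠ x in atTop, ψ x ^ (n - 1) / g' x =
        (γ * x ^ (γ - 1) + ((n:ℝ) - 1) * (x ^ γ * deriv ψ x / ψ x))⁻¹ := by
      filter_upwards [eventually_ge_atTop (1:ℝ)] with x hx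
      have hψx := hψpos x hx
      have hcast : ((n - 1 : ℕ) : ℝ) = (n:ℝ) - 1 := by
        have : 1 ≤ n := by omega
        push_cast [Nat.cast_sub this]; ring
      have hpow : ψ x ^ (n - 1 - 1) * ψ x = ψ x ^ (n - 1) := by
        rw [← pow_succ]; congr 1; omega
      have hg'eq : g' x = ψ x ^ (n - 1) *
          (γ * x ^ (γ - 1) + ((n:ℝ) - 1) * (x ^ γ * deriv ψ x / ψ x)) := by
        simp only [hg', hcast]
        rw [← hpow]
        field_simp
      rw [hg'eq, ← div_div, div_self (by positivity : ψ x ^ (n - 1) ≠ 0), one_div]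
    apply Tendsto.congr' (EventuallyEq.symm heq)
    have h1 : Tendsto (fun x : ℝ => γ * x ^ (γ - 1)) atTop (𝓝 0) := by
      have := tendsto_rpow_neg_atTop (by linarith : (0:ℝ) < 1 - γ)
      have h2 := this.const_mul γ
      simp only [mul_zero] at h2
      apply h2.congr
      intro x; congr 1; ring_nf
    have h2 : Tendsto (fun x : ℝ => ((n:ℝ) - 1) * (x ^ γ * deriv ψ x / ψ x)) atTop
        (𝓝 (((n:ℝ) - 1) * ℓ)) := hA.const_mul _
    have hsum := h1.add h2
    rw [zero_add] at hsum
    exact hsum.inv₀ (by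
      have hn1 : (1:ℝ) ≤ (n:ℝ) - 1 := by
        have : (2:ℝ) ≤ n := by exact_mod_cast hn
        linarith
      positivity)
  exact lhopital_inf 1 (fun x _ => hVd x) hgd hcont.continuousOn hg'cont hg'pos hgtop hratio


lemma caseB (n : ℕ) (hn : 2 ≤ n) (hψ : IsCHModel ψ)
    (hb2 : Tendsto (fun r : ℝ => ψ r / deriv ψ r *
      deriv (fun s : ℝ => Real.log (deriv ψ s / ψ s)) r) atTop (𝓝 0)) :
    Tendsto (fun r : ℝ => (∫ s in (0:ℝ)..r, ψ s ^ (n - 1)) /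
      (ψ r ^ n / deriv ψ r)) atTop (𝓝 ((n : ℝ) - 1)⁻¹) := by
  have hcont : Continuous fun s => ψ s ^ (n - 1) := ((CH.diff hψ).continuous).pow _
  have hVd : ∀ r : ℝ, HasDerivAt (fun r => ∫ s in (0:ℝ)..r, ψ s ^ (n - 1))
      (ψ r ^ (n - 1)) r := fun r => (hcont.integral_hasStrictDerivAt 0 r).hasDerivAt
  set E : ℝ → ℝ := fun x => deriv (deriv ψ) x * ψ x / (deriv ψ x) ^ 2 with hE
  have hψpos : ∀ x : ℝ, (1:ℝ) ≤ x → 0 < ψ x := fun x hx => hψ.2.2.2.2 x (by linarith)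
  have hdpos : ∀ x : ℝ, (0:ℝ) ≤ x → 0 < deriv ψ x := fun x hx =>
    lt_of_lt_of_le one_pos (CH.one_le_deriv hψ x hx)
  -- E → 1
  have hEtend : Tendsto E atTop (𝓝 1) := by
    have heq : ∀ᶠ x in atTop, ψ x / deriv ψ x *
        deriv (fun s : ℝ => Real.log (deriv ψ s / ψ s)) x = E x - 1 := by
      filter_upwards [eventually_ge_atTop (1:ℝ)] with x hx
      have hψx := hψpos x hx
      have hdx := hdpos x (by linarith)
      have hhd : HasDerivAt (fun s => deriv ψ s / ψ s)
          ((deriv (deriv ψ) x * ψ x - deriv ψ x * deriv ψ x) / ψ x ^ 2) x :=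
        ((CH.diffDeriv hψ x).hasDerivAt).div ((CH.diff hψ x).hasDerivAt) hψx.ne'
      have hne : deriv ψ x / ψ x ≠ 0 := by positivity
      have hld := (hhd.log hne).deriv
      rw [hld, hE]
      field_simp
    have h1 : Tendsto (fun x => E x - 1) atTop (𝓝 0) := hb2.congr' heq
    have := h1.add_const 1
    simpa using this
  -- choose a
  have hev : ∀ᶠ x in atTop, |E x - 1| < 1/2 ∧ (1:ℝ) ≤ x := by
    have h1 : ∀ᶠ x in atTop, |E x - 1| < 1/2 := by
      have := hEtend.sub_const 1
      simp only [sub_self] at this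
      have := Metric.tendsto_atTop.1 this (1/2) (by norm_num)
      obtain ⟨N, hN⟩ := this
      filter_upwards [eventually_ge_atTop N] with x hx
      simpa [Real.dist_eq] using hN x hx
    exact h1.and (eventually_ge_atTop 1)
  obtain ⟨a, ha⟩ := hev.exists_forall_of_atTop
  have ha1 : (1:ℝ) ≤ a := (ha a le_rfl).2
  set g : ℝ → ℝ := fun r => ψ r ^ n / deriv ψ r with hg
  set g' : ℝ → ℝ := fun x =>
    ((n : ℕ) * ψ x ^ (n - 1) * deriv ψ x * deriv ψ x - ψ x ^ n * deriv (deriv ψ) x) /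
      (deriv ψ x) ^ 2 with hg'
  have hgd : ∀ x : ℝ, a ≤ x → HasDerivAt g (g' x) x := by
    intro x hx
    have hdx : deriv ψ x ≠ 0 := (hdpos x (by linarith)).ne'
    have h1 : HasDerivAt (fun r => ψ r ^ n) ((n:ℕ) * ψ x ^ (n - 1) * deriv ψ x) x :=
      ((CH.diff hψ x).hasDerivAt).pow n
    have h2 : HasDerivAt (deriv ψ) (deriv (deriv ψ) x) x := (CH.diffDeriv hψ x).hasDerivAt
    exact h1.div h2 hdx
  have hg'eq : ∀ x : ℝ, a ≤ x → g' x = ψ x ^ (n - 1) * ((n:ℝ) - E x) := by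
    intro x hx
    have hψx := hψpos x (le_trans ha1 hx)
    have hdx := hdpos x (by linarith)
    have hpow : ψ x ^ (n - 1) * ψ x = ψ x ^ n := by
      rw [← pow_succ]; congr 1; omega
    simp only [hg', hE]
    rw [← hpow]
    field_simp
  have hg'pos : ∀ x : ℝ, a ≤ x → 0 < g' x := by
    intro x hx
    rw [hg'eq x hx]
    have hψx := hψpos x (le_trans ha1 hx)
    have hEx := (ha x hx).1
    rw [abs_lt] at hEx
    have : (2:ℝ) ≤ n := by exact_mod_cast hn
    have hp : (0:ℝ) < ψ x ^ (n - 1) := by positivity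
    nlinarith
  have hg'cont : ContinuousOn g' (Set.Ici a) := by
    apply ContinuousOn.div
    · exact (((continuous_const.mul ((CH.diff hψ).continuous.pow _)).mul
        (CH.diffDeriv hψ).continuous).mul (CH.diffDeriv hψ).continuous |>.sub
        (((CH.diff hψ).continuous.pow _).mul (CH.contD2 hψ))).continuousOn
    · exact ((CH.diffDeriv hψ).continuous.pow 2).continuousOn
    · intro x hx
      have := hdpos x (by simp at hx; linarith)
      positivity
  have hgtop : Tendsto g atTop atTop := by
    set φ : ℝ → ℝ := fun x => g x - x ^ n / (2 * n) with hφ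
    have hφd : ∀ x : ℝ, a ≤ x → HasDerivAt φ (g' x - (n:ℕ) * x ^ (n - 1) / (2 * n)) x := by
      intro x hx
      exact (hgd x hx).sub ((hasDerivAt_pow n x).div_const (2 * n))
    have hφmono : MonotoneOn φ (Set.Ici a) := by
      apply monotoneOn_of_deriv_nonneg (convex_Ici a)
      · intro x hx
        exact ((hφd x hx).continuousAt).continuousWithinAt
      · intro x hx
        rw [interior_Ici] at hx
        exact ((hφd x hx.le).differentiableAt).differentiableWithinAt
      · intro x hx
        rw [interior_Ici] at hx
        rw [(hφd x hx.le).deriv]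
        have hg'x := hg'eq x hx.le
        have hψx := hψpos x (le_trans ha1 hx.le)
        have hxx : (1:ℝ) ≤ x := le_trans ha1 hx.le
        have hEx := (ha x hx.le).1
        rw [abs_lt] at hEx
        have h2n : (2:ℝ) ≤ n := by exact_mod_cast hn
        have hψge : x ≤ ψ x := CH.le_self hψ x (by linarith)
        have hxp : (0:ℝ) < x := by linarith
        have hpowle : x ^ (n - 1) ≤ ψ x ^ (n - 1) := pow_le_pow_left₀ hxp.le hψge _
        have hp : (0:ℝ) < ψ x ^ (n - 1) := by positivity
        rw [hg'x]
        have hnpos : (0:ℝ) < n := by linarith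
        rw [sub_nonneg, div_le_iff₀ (by positivity)]
        have hxpow : (0:ℝ) ≤ x ^ (n-1) := by positivity
        have h5 : (1/2:ℝ) ≤ (n:ℝ) - E x := by linarith
        have h6 : x ^ (n-1) * (1/2) ≤ ψ x ^ (n - 1) * ((n:ℝ) - E x) :=
          mul_le_mul hpowle h5 (by norm_num) hp.le
        calc ((n:ℕ) : ℝ) * x ^ (n - 1) = (n:ℝ) * x ^ (n-1) := by norm_num
          _ ≤ ψ x ^ (n - 1) * ((n:ℝ) - E x) * (2 * n) := by nlinarith
    have hbound : ∀ x : ℝ, a ≤ x → φ a + x ^ n / (2 * n) ≤ g x := by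
      intro x hx
      have := hφmono (Set.mem_Ici.2 le_rfl) hx hx
      simp only [hφ] at this
      linarith
    apply tendsto_atTop_mono' atTop _
      (tendsto_atTop_add_const_left atTop (φ a)
        ((tendsto_pow_atTop (by omega : n ≠ 0)).atTop_div_const (show (0:ℝ) < 2*n by positivity)))
    filter_upwards [eventually_ge_atTop a] with x hx using hbound x hx
  have hratio : Tendsto (fun x => ψ x ^ (n - 1) / g' x) atTop (𝓝 ((n:ℝ) - 1)⁻¹) := by
    have heq : ∀ᶠ x in atTop, ψ x ^ (n - 1) / g' x = ((n:ℝ) - E x)⁻¹ := by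
      filter_upwards [eventually_ge_atTop a] with x hx
      have hψx := hψpos x (le_trans ha1 hx)
      rw [hg'eq x hx, ← div_div, div_self (by positivity : ψ x ^ (n - 1) ≠ 0), one_div]
    apply Tendsto.congr' (EventuallyEq.symm heq)
    have h1 : Tendsto (fun x => (n:ℝ) - E x) atTop (𝓝 ((n:ℝ) - 1)) :=
      tendsto_const_nhds.sub hEtend
    apply h1.inv₀
    have : (2:ℝ) ≤ n := by exact_mod_cast hn
    linarith
  exact lhopital_inf a (fun x _ => hVd x) hgd hcont.continuousOn hg'cont hg'pos hgtop hratio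

end Aux

/-- under condition (a) or (b), `ψ^{n-1}/((ψ'/ψ)∫₀ʳ ψ^{n-1}) → n-1`;
equivalently `Θ(r) ψ'(r)/ψ(r) → 1/(n-1)`. -/
theorem statement_13 (n : ℕ) (hn : 2 ≤ n)
    (ψ : ℝ → ℝ) (hψ : IsCHModel ψ) (hcond : CondA ψ ∨ CondB ψ) :
    Tendsto (fun r : ℝ => ψ r ^ (n - 1) /
        ((deriv ψ r / ψ r) * ∫ s in (0:ℝ)..r, ψ s ^ (n - 1))) atTop
      (nhds ((n : ℝ) - 1)) ∧
      Tendsto (fun r : ℝ => Theta n ψ r * (deriv ψ r / ψ r)) atTop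
        (nhds (1 / ((n : ℝ) - 1))) := by
  have hn1 : ((n : ℝ) - 1) ≠ 0 := by
    have : (2:ℝ) ≤ n := by exact_mod_cast hn
    linarith
  have hcontpow : Continuous fun s => ψ s ^ (n - 1) := ((CH.diff hψ).continuous).pow _
  have hψpos : ∀ x : ℝ, (1:ℝ) ≤ x → 0 < ψ x := fun x hx => hψ.2.2.2.2 x (by linarith)
  have hdpos : ∀ x : ℝ, (0:ℝ) ≤ x → 0 < deriv ψ x := fun x hx =>
    lt_of_lt_of_le one_pos (CH.one_le_deriv hψ x hx)
  have hVpos : ∀ x : ℝ, (1:ℝ) ≤ x → 0 < ∫ s in (0:ℝ)..x, ψ s ^ (n - 1) := by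
    intro x hx
    apply intervalIntegral.intervalIntegral_pos_of_pos_on
      (hcontpow.intervalIntegrable 0 x)
      (fun s hs => by
        have := hψ.2.2.2.2 s hs.1
        positivity)
      (by linarith)
  have goal1 : Tendsto (fun r : ℝ => ψ r ^ (n - 1) /
      ((deriv ψ r / ψ r) * ∫ s in (0:ℝ)..r, ψ s ^ (n - 1))) atTop
      (nhds ((n : ℝ) - 1)) := by
    rcases hcond with ⟨γ, ℓ, hγ0, hγ1, hℓ, hA⟩ | ⟨_, hb2⟩
    · have hT := caseA n hn hψ hγ0 hγ1 hℓ hA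
      have hprod_ne : (((n : ℝ) - 1) * ℓ) ≠ 0 := mul_ne_zero hn1 hℓ.ne'
      have hTi := hT.inv₀ (inv_ne_zero hprod_ne)
      have hAi := hA.inv₀ hℓ.ne'
      have hmul := hTi.mul hAi
      rw [inv_inv] at hmul
      have hval : ((n : ℝ) - 1) * ℓ * ℓ⁻¹ = (n : ℝ) - 1 := by field_simp
      rw [hval] at hmul
      apply hmul.congr'
      filter_upwards [eventually_ge_atTop (1:ℝ)] with x hx
      have hψx := hψpos x hx
      have hdx := hdpos x (by linarith)
      have hVx := hVpos x hx
      have hrp : (0:ℝ) < x ^ γ := Real.rpow_pos_of_pos (by linarith) γ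
      field_simp
    · have hT := caseB n hn hψ hb2
      have hTi := hT.inv₀ (inv_ne_zero hn1)
      rw [inv_inv] at hTi
      apply hTi.congr'
      filter_upwards [eventually_ge_atTop (1:ℝ)] with x hx
      have hψx := hψpos x hx
      have hdx := hdpos x (by linarith)
      have hVx := hVpos x hx
      have hpow : ψ x ^ n = ψ x ^ (n - 1) * ψ x := by
        rw [← pow_succ]; congr 1; omega
      rw [hpow]
      field_simp
  refine ⟨goal1, ?_⟩
  have := goal1.inv₀ hn1
  rw [← one_div] at this
  apply this.congr
  intro r
  simp only [Theta]
  rw [inv_div]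
  ring
end

section
/- Let ψ be a Cartan–Hadamard model function such that liminf_{r→∞} (∫₀ʳ Θ(s)^{p/(p−1)}·ψ(s)^{n−1} ds) / (ψ(r)^{n−1}·Θ(r)·∫₀ʳ Θ(s)^{1/(p−1)} ds) > 0. Then ∫₀^∞ Θ(s)^{1/(p−1)} ds = +∞, and for every global radial solution u the asymptotic formula fails: it is NOT the case that lim_{r→∞} (∫₀ʳ Θ(s)^{1/(p−1)} ds)^{(p−1)/(q+1−p)}·u(r) = ((p−1)/(q+1−p))^{(p−1)/(q+1−p)}. -/
open Real Filter MeasureTheory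
open scoped ENNReal Topology

namespace St19
open Real Filter MeasureTheory Set intervalIntegral
open scoped ENNReal Topology

lemma monoOn_aux {f f' : ℝ → ℝ} {a : ℝ} (hc : ContinuousOn f (Ici a))
    (hd : ∀ x, a < x → HasDerivAt f (f' x) x)
    (h0 : ∀ x, a < x → 0 ≤ f' x) : MonotoneOn f (Ici a) := by
  refine monotoneOn_of_deriv_nonneg (convex_Ici a) hc ?_ ?_
  · rw [interior_Ici]; exact fun x hx => (hd x hx).differentiableAt.differentiableWithinAt
  · rw [interior_Ici]; intro x hx; rw [(hd x hx).deriv]; exact h0 x hx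

lemma constOn_aux {f f' : ℝ → ℝ} {a : ℝ} (hc : ContinuousOn f (Ici a))
    (hd : ∀ x, a < x → HasDerivAt f (f' x) x)
    (h0 : ∀ x, a < x → f' x = 0) : ∀ x, a ≤ x → f x = f a := by
  intro x hx
  have h1 := monoOn_aux hc hd (fun x hx => (h0 x hx).ge) (Set.mem_Ici.mpr le_rfl) hx hx
  have h2 := monoOn_aux (f := fun y => -f y) (f' := fun y => -(f' y))
      (hc.neg) (fun y hy => (hd y hy).neg)
      (fun y hy => by show (0:ℝ) ≤ -(f' y); rw [h0 y hy]; norm_num)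
      (Set.mem_Ici.mpr le_rfl) hx hx
  simp only [neg_le_neg_iff] at h2
  linarith

lemma antiOn_Icc_aux {f f' : ℝ → ℝ} {a b : ℝ} (hc : ContinuousOn f (Icc a b))
    (hd : ∀ x ∈ Ioo a b, HasDerivAt f (f' x) x)
    (h0 : ∀ x ∈ Ioo a b, f' x ≤ 0) : AntitoneOn f (Icc a b) := by
  refine antitoneOn_of_deriv_nonpos (convex_Icc a b) hc ?_ ?_
  · rw [interior_Icc]; exact fun x hx => (hd x hx).differentiableAt.differentiableWithinAt
  · rw [interior_Icc]; intro x hx; rw [(hd x hx).deriv]; exact h0 x hx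

lemma bernoulli_aux {a t : ℝ} (ha : 0 < a) (ht0 : 0 ≤ t) (ht1 : t < 1) :
    1 + a * t ≤ (1 - t) ^ (-a) := by
  have h1t : 0 < 1 - t := by linarith
  have hpos : 0 < (1 - t) ^ a := Real.rpow_pos_of_pos h1t a
  rw [Real.rpow_neg h1t.le, ← one_div, le_div_iff₀ hpos]
  have key : AntitoneOn (fun x => (1 + a * x) * (1 - x) ^ a) (Icc 0 t) := by
    refine antiOn_Icc_aux (f' := fun x => a * (1 - x) ^ a +
        (1 + a * x) * (a * (1 - x) ^ (a - 1) * (-1))) ?_ ?_ ?_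
    · apply ContinuousOn.mul
      · fun_prop
      · intro x hx
        have hx1 : (0:ℝ) < 1 - x := by have := lt_of_le_of_lt hx.2 ht1; linarith
        exact (ContinuousWithinAt.rpow_const
          ((continuous_const.sub continuous_id).continuousWithinAt) (Or.inl hx1.ne'))
    · intro x hx
      have h1x : (1:ℝ) - x ≠ 0 := ne_of_gt (by have := hx.2.trans ht1; linarith)
      have H1 : HasDerivAt (fun y : ℝ => 1 - y) (-1) x := by
        simpa using (hasDerivAt_id x).const_sub 1
      have H2 : HasDerivAt (fun y : ℝ => 1 + a * y) a x := by
        simpa using ((hasDerivAt_id x).const_mul a).const_add 1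
      have H := H2.fun_mul (H1.rpow_const (p := a) (Or.inl h1x))
      refine H.congr_deriv ?_
      ring
    · intro x hx
      have h1x : (0:ℝ) < 1 - x := by have := hx.2.trans ht1; linarith
      have hP : 0 < (1 - x) ^ (a - 1) := Real.rpow_pos_of_pos h1x _
      have hfact : (1 - x) ^ a = (1 - x) ^ (a - 1) * (1 - x) := by
        rw [← Real.rpow_add_one h1x.ne' (a - 1), sub_add_cancel]
      show a * (1 - x) ^ a + (1 + a * x) * (a * (1 - x) ^ (a - 1) * -1) ≤ 0
      rw [hfact]
      nlinarith [mul_pos ha hP, hx.1, mul_pos (mul_pos ha hP) hx.1]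
  have h2 := key (left_mem_Icc.mpr ht0) (right_mem_Icc.mpr ht0) ht0
  simpa using h2

lemma uIcc_subset_Ici {a b : ℝ} (ha : 0 ≤ a) (hb : 0 ≤ b) : uIcc a b ⊆ Ici 0 :=
  fun x hx => le_trans (le_min ha hb) hx.1

lemma ii_aux {f : ℝ → ℝ} (hf : ContinuousOn f (Ici 0)) {a b : ℝ} (ha : 0 ≤ a) (hb : 0 ≤ b) :
    IntervalIntegrable f volume a b :=
  (hf.mono (uIcc_subset_Ici ha hb)).intervalIntegrable

lemma ftc_aux {f : ℝ → ℝ} (hf : ContinuousOn f (Ici 0)) {r : ℝ} (hr : 0 < r) :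
    HasDerivAt (fun x => ∫ t in (0:ℝ)..x, f t) (f r) r := by
  have hio : ContinuousOn f (Ioi 0) := hf.mono Ioi_subset_Ici_self
  refine integral_hasDerivAt_right (ii_aux hf le_rfl hr.le) ?_ ?_
  · exact hio.stronglyMeasurableAtFilter isOpen_Ioi r hr
  · exact hio.continuousAt (Ioi_mem_nhds hr)

lemma primitive_cont_aux {f : ℝ → ℝ} (hf : ContinuousOn f (Ici 0)) :
    ContinuousOn (fun x => ∫ t in (0:ℝ)..x, f t) (Ici 0) := by
  intro x hx
  have hx0 : (0:ℝ) ≤ x := hx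
  have hsub : uIcc (0:ℝ) (x + 1) = Icc 0 (x+1) := uIcc_of_le (by linarith)
  have hint : IntegrableOn f (uIcc 0 (x+1)) volume := by
    rw [hsub]; exact (hf.mono (Icc_subset_Ici_self)).integrableOn_Icc
  have h1 : ContinuousOn (fun b => ∫ t in (0:ℝ)..b, f t) (uIcc 0 (x+1)) :=
    continuousOn_primitive_interval hint
  have hx' : x ∈ uIcc (0:ℝ) (x+1) := by rw [hsub]; exact ⟨hx, by linarith⟩
  refine (h1 x hx').mono_of_mem_nhdsWithin ?_
  rw [hsub, ← Ici_inter_Iic]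
  exact inter_mem_nhdsWithin _ (Iic_mem_nhds (by linarith))

noncomputable def Vv (n : ℕ) (ψ : ℝ → ℝ) (r : ℝ) : ℝ := ∫ s in (0:ℝ)..r, ψ s ^ (n-1)
noncomputable def th (n : ℕ) (p : ℝ) (ψ : ℝ → ℝ) (s : ℝ) : ℝ := Theta n ψ s ^ (1/(p-1))
noncomputable def Jj (n : ℕ) (p : ℝ) (ψ : ℝ → ℝ) (r : ℝ) : ℝ := ∫ s in (0:ℝ)..r, th n p ψ s

structure MF (n : ℕ) (p : ℝ) (ψ : ℝ → ℝ) : Prop where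
  psi_le : ∀ r : ℝ, 0 ≤ r → r ≤ ψ r
  psi_pos : ∀ r : ℝ, 0 < r → 0 < ψ r
  phi_cont : Continuous (fun s : ℝ => ψ s ^ (n-1))
  phi_pos : ∀ r : ℝ, 0 < r → 0 < ψ r ^ (n-1)
  phi_nonneg : ∀ r : ℝ, 0 ≤ r → 0 ≤ ψ r ^ (n-1)
  phi_zero : ψ 0 ^ (n-1) = 0
  phi_mono : MonotoneOn (fun s : ℝ => ψ s ^ (n-1)) (Ici 0)
  V_cont : ContinuousOn (Vv n ψ) (Ici 0)
  V_deriv : ∀ r : ℝ, 0 < r → HasDerivAt (Vv n ψ) (ψ r ^ (n-1)) r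
  V_pos : ∀ r : ℝ, 0 < r → 0 < Vv n ψ r
  V_nonneg : ∀ r : ℝ, 0 ≤ r → 0 ≤ Vv n ψ r
  V_mono : MonotoneOn (Vv n ψ) (Ici 0)
  V_top : Tendsto (Vv n ψ) atTop atTop
  V_zero : Vv n ψ 0 = 0
  Th_pos : ∀ r : ℝ, 0 < r → 0 < Theta n ψ r
  Th_nonneg : ∀ r : ℝ, 0 ≤ r → 0 ≤ Theta n ψ r
  Th_mul : ∀ r : ℝ, 0 < r → Theta n ψ r * ψ r ^ (n-1) = Vv n ψ r
  th_cont : ContinuousOn (th n p ψ) (Ici 0)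
  th_pos : ∀ r : ℝ, 0 < r → 0 < th n p ψ r
  th_nonneg : ∀ r : ℝ, 0 ≤ r → 0 ≤ th n p ψ r
  J_cont : ContinuousOn (Jj n p ψ) (Ici 0)
  J_deriv : ∀ r : ℝ, 0 < r → HasDerivAt (Jj n p ψ) (th n p ψ r) r
  J_mono : MonotoneOn (Jj n p ψ) (Ici 0)
  J_nonneg : ∀ r : ℝ, 0 ≤ r → 0 ≤ Jj n p ψ r
  J_pos : ∀ r : ℝ, 0 < r → 0 < Jj n p ψ r
  J_zero : Jj n p ψ 0 = 0
  thV_cont : ContinuousOn (fun s => th n p ψ s * Vv n ψ s) (Ici 0)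
  Num_eq : ∀ r : ℝ, 0 ≤ r → (∫ s in (0:ℝ)..r, Theta n ψ s ^ (p/(p-1)) * ψ s ^ (n-1))
      = ∫ s in (0:ℝ)..r, th n p ψ s * Vv n ψ s
  Num_id : ∀ r : ℝ, 0 ≤ r → (∫ s in (0:ℝ)..r, th n p ψ s * Vv n ψ s)
      = Jj n p ψ r * Vv n ψ r - ∫ s in (0:ℝ)..r, ψ s ^ (n-1) * Jj n p ψ s

lemma mf {n : ℕ} {p : ℝ} {ψ : ℝ → ℝ} (hn : 2 ≤ n) (hp : 1 < p) (hψ : IsCHModel ψ) :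
    MF n p ψ := by
  obtain ⟨hsm, h0, h1, hconv, hpos⟩ := hψ
  have hsm2 : ContDiff ℝ ((⊤:ℕ∞):WithTop ℕ∞) ψ := hsm.of_le (by simp)
  have hd : Differentiable ℝ ψ := hsm2.differentiable (by simp)
  have hd' : Differentiable ℝ (deriv ψ) :=
    ((contDiff_infty_iff_deriv.mp hsm2).2).differentiable (by simp)
  have hmono' : MonotoneOn (deriv ψ) (Ici 0) :=
    monoOn_aux (hd'.continuous.continuousOn) (fun x _ => (hd' x).hasDerivAt)
      (fun x hx => hconv x hx.le)
  have h1le : ∀ r : ℝ, 0 ≤ r → 1 ≤ deriv ψ r := by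
    intro r hr; rw [← h1]; exact hmono' (Set.mem_Ici.mpr le_rfl) hr hr
  have psi_le : ∀ r : ℝ, 0 ≤ r → r ≤ ψ r := by
    intro r hr
    have := monoOn_aux (f := fun x => ψ x - x) (f' := fun x => deriv ψ x - 1)
      ((hd.continuous.continuousOn).sub continuousOn_id)
      (fun x _ => ((hd x).hasDerivAt.sub (hasDerivAt_id x)))
      (fun x hx => by have := h1le x hx.le; show (0:ℝ) ≤ deriv ψ x - 1; linarith)
      (Set.mem_Ici.mpr le_rfl) hr hr
    simp only [h0, sub_zero, zero_sub] at this
    linarith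
  have psi_mono : MonotoneOn ψ (Ici 0) :=
    monoOn_aux hd.continuous.continuousOn (fun x _ => (hd x).hasDerivAt)
      (fun x hx => le_trans zero_le_one (h1le x hx.le))
  have hn1 : n - 1 ≠ 0 := by omega
  have phi_cont : Continuous (fun s : ℝ => ψ s ^ (n-1)) := hd.continuous.pow _
  have phi_pos : ∀ r : ℝ, 0 < r → 0 < ψ r ^ (n-1) := fun r hr => pow_pos (hpos r hr) _
  have phi_nonneg : ∀ r : ℝ, 0 ≤ r → 0 ≤ ψ r ^ (n-1) := by
    intro r hr; exact pow_nonneg (le_trans hr (psi_le r hr)) _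
  have phi_zero : ψ 0 ^ (n-1) = 0 := by rw [h0]; exact zero_pow hn1
  have phi_mono : MonotoneOn (fun s : ℝ => ψ s ^ (n-1)) (Ici 0) := by
    intro x hx y hy hxy
    exact pow_le_pow_left₀ (le_trans hx (psi_le x hx)) (psi_mono hx hy hxy) _
  have V_cont : ContinuousOn (Vv n ψ) (Ici 0) := primitive_cont_aux phi_cont.continuousOn
  have V_deriv : ∀ r : ℝ, 0 < r → HasDerivAt (Vv n ψ) (ψ r ^ (n-1)) r :=
    fun r hr => ftc_aux phi_cont.continuousOn hr
  have V_pos : ∀ r : ℝ, 0 < r → 0 < Vv n ψ r := by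
    intro r hr
    exact intervalIntegral_pos_of_pos_on (ii_aux phi_cont.continuousOn le_rfl hr.le)
      (fun x hx => phi_pos x hx.1) hr
  have V_zero : Vv n ψ 0 = 0 := integral_same
  have V_nonneg : ∀ r : ℝ, 0 ≤ r → 0 ≤ Vv n ψ r := by
    intro r hr
    rcases eq_or_lt_of_le hr with h|h
    · rw [← h, V_zero]
    · exact (V_pos r h).le
  have V_mono : MonotoneOn (Vv n ψ) (Ici 0) :=
    monoOn_aux V_cont (fun x hx => V_deriv x hx) (fun x hx => (phi_pos x hx).le)
  have V_low : ∀ r : ℝ, 0 ≤ r → r ^ n / (n:ℝ) ≤ Vv n ψ r := by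
    intro r hr
    have h1 : (∫ s in (0:ℝ)..r, s^(n-1)) ≤ Vv n ψ r := by
      refine integral_mono_on hr ((continuous_pow _).intervalIntegrable _ _)
        (ii_aux phi_cont.continuousOn le_rfl hr) ?_
      intro x hx
      exact pow_le_pow_left₀ hx.1 (psi_le x hx.1) _
    rw [integral_pow] at h1
    have he : n - 1 + 1 = n := by omega
    have hc : ((n - 1 : ℕ) : ℝ) + 1 = (n : ℝ) := by
      rw [Nat.cast_sub (by omega : (1:ℕ) ≤ n)]; ring
    rw [he, zero_pow (by omega : n ≠ 0), sub_zero, hc] at h1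
    exact h1
  have V_top : Tendsto (Vv n ψ) atTop atTop := by
    refine tendsto_atTop_mono' atTop ?_ ((tendsto_pow_atTop (by omega : n ≠ 0)).atTop_div_const
      (by positivity : (0:ℝ) < (n:ℝ)))
    filter_upwards [eventually_ge_atTop (0:ℝ)] with r hr using V_low r hr
  have Th_eq : ∀ r : ℝ, Theta n ψ r = Vv n ψ r / ψ r ^ (n-1) := fun r => rfl
  have Th_pos : ∀ r : ℝ, 0 < r → 0 < Theta n ψ r := by
    intro r hr; rw [Th_eq]; exact div_pos (V_pos r hr) (phi_pos r hr)
  have Th_zero : Theta n ψ 0 = 0 := by rw [Th_eq, V_zero, zero_div]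
  have Th_nonneg : ∀ r : ℝ, 0 ≤ r → 0 ≤ Theta n ψ r := by
    intro r hr
    rcases eq_or_lt_of_le hr with h|h
    · rw [← h, Th_zero]
    · exact (Th_pos r h).le
  have Th_mul : ∀ r : ℝ, 0 < r → Theta n ψ r * ψ r ^ (n-1) = Vv n ψ r := by
    intro r hr; rw [Th_eq, div_mul_cancel₀ _ (phi_pos r hr).ne']
  have Th_le : ∀ r : ℝ, 0 ≤ r → Theta n ψ r ≤ r := by
    intro r hr
    rcases eq_or_lt_of_le hr with h|h
    · rw [← h, Th_zero]
    · rw [Th_eq, div_le_iff₀ (phi_pos r h)]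
      have : Vv n ψ r ≤ ∫ _ in (0:ℝ)..r, ψ r ^ (n-1) := by
        refine integral_mono_on hr (ii_aux phi_cont.continuousOn le_rfl hr)
          (intervalIntegrable_const) ?_
        intro x hx
        exact phi_mono hx.1 hr hx.2
      rw [intervalIntegral.integral_const, smul_eq_mul, sub_zero] at this
      linarith
  have Th_cont : ContinuousOn (Theta n ψ) (Ici 0) := by
    intro x hx
    rcases eq_or_lt_of_le (Set.mem_Ici.mp hx) with h|h
    · rw [← h]
      have hid : Tendsto (fun s : ℝ => s) (𝓝[Ici (0:ℝ)] 0) (𝓝 0) :=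
        tendsto_id.mono_left nhdsWithin_le_nhds
      rw [ContinuousWithinAt, Th_zero]
      refine tendsto_of_tendsto_of_tendsto_of_le_of_le'
        (tendsto_const_nhds : Tendsto (fun _ : ℝ => (0:ℝ)) (𝓝[Ici (0:ℝ)] 0) (𝓝 0)) hid ?_ ?_
      · filter_upwards [self_mem_nhdsWithin] with s hs using Th_nonneg s hs
      · filter_upwards [self_mem_nhdsWithin] with s hs using Th_le s hs
    · exact ((V_cont x hx).div (phi_cont.continuousWithinAt) (phi_pos x h).ne')
  have hp1 : (0:ℝ) < p - 1 := by linarith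
  have hip : 0 < 1/(p-1) := one_div_pos.mpr hp1
  have th_cont : ContinuousOn (th n p ψ) (Ici 0) := by
    intro x hx
    exact (Th_cont x hx).rpow_const (Or.inr hip.le)
  have th_pos : ∀ r : ℝ, 0 < r → 0 < th n p ψ r :=
    fun r hr => Real.rpow_pos_of_pos (Th_pos r hr) _
  have th_nonneg : ∀ r : ℝ, 0 ≤ r → 0 ≤ th n p ψ r :=
    fun r hr => Real.rpow_nonneg (Th_nonneg r hr) _
  have J_cont : ContinuousOn (Jj n p ψ) (Ici 0) := primitive_cont_aux th_cont
  have J_deriv : ∀ r : ℝ, 0 < r → HasDerivAt (Jj n p ψ) (th n p ψ r) r :=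
    fun r hr => ftc_aux th_cont hr
  have J_mono : MonotoneOn (Jj n p ψ) (Ici 0) :=
    monoOn_aux J_cont (fun x hx => J_deriv x hx) (fun x hx => (th_pos x hx).le)
  have J_zero : Jj n p ψ 0 = 0 := integral_same
  have J_pos : ∀ r : ℝ, 0 < r → 0 < Jj n p ψ r := by
    intro r hr
    exact intervalIntegral_pos_of_pos_on (ii_aux th_cont le_rfl hr.le)
      (fun x hx => th_pos x hx.1) hr
  have J_nonneg : ∀ r : ℝ, 0 ≤ r → 0 ≤ Jj n p ψ r := by
    intro r hr
    rcases eq_or_lt_of_le hr with h|h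
    · rw [← h, J_zero]
    · exact (J_pos r h).le
  have thV_cont : ContinuousOn (fun s => th n p ψ s * Vv n ψ s) (Ici 0) := th_cont.mul V_cont
  have Num_eq : ∀ r : ℝ, 0 ≤ r → (∫ s in (0:ℝ)..r, Theta n ψ s ^ (p/(p-1)) * ψ s ^ (n-1))
      = ∫ s in (0:ℝ)..r, th n p ψ s * Vv n ψ s := by
    intro r hr
    refine integral_congr ?_
    intro s hs
    have hs0 : 0 ≤ s := (uIcc_subset_Ici le_rfl hr) hs
    show Theta n ψ s ^ (p/(p-1)) * ψ s ^ (n-1) = th n p ψ s * Vv n ψ s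
    rcases eq_or_lt_of_le hs0 with h|h
    · rw [← h, phi_zero, Vv, integral_same, mul_zero, mul_zero]
    · have hpe : p/(p-1) = 1/(p-1) + 1 := by field_simp; ring
      rw [hpe, Real.rpow_add (Th_pos s h), Real.rpow_one, mul_assoc, Th_mul s h]
      rfl
  have Num_id : ∀ r : ℝ, 0 ≤ r → (∫ s in (0:ℝ)..r, th n p ψ s * Vv n ψ s)
      = Jj n p ψ r * Vv n ψ r - ∫ s in (0:ℝ)..r, ψ s ^ (n-1) * Jj n p ψ s := by
    have phiJ_cont : ContinuousOn (fun s => ψ s ^ (n-1) * Jj n p ψ s) (Ici 0) :=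
      phi_cont.continuousOn.mul J_cont
    have key := constOn_aux (a := 0)
      (f := fun r => Jj n p ψ r * Vv n ψ r - (∫ s in (0:ℝ)..r, ψ s ^ (n-1) * Jj n p ψ s)
        - ∫ s in (0:ℝ)..r, th n p ψ s * Vv n ψ s)
      (f' := fun _ => 0) ?_ ?_ (fun _ _ => rfl)
    · intro r hr
      have h2 := key r hr
      simp only [J_zero, V_zero, integral_same, mul_zero, zero_mul, sub_zero, zero_sub] at h2
      linarith [h2]
    · exact ((J_cont.mul V_cont).sub (primitive_cont_aux phiJ_cont)).sub
        (primitive_cont_aux thV_cont)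
    · intro r hr
      have H := (((J_deriv r hr).fun_mul (V_deriv r hr)).fun_sub (ftc_aux phiJ_cont hr)).fun_sub
        (ftc_aux thV_cont hr)
      refine H.congr_deriv ?_
      ring
  exact ⟨psi_le, hpos, phi_cont, phi_pos, phi_nonneg, phi_zero, phi_mono, V_cont, V_deriv,
    V_pos, V_nonneg, V_mono, V_top, V_zero, Th_pos, Th_nonneg, Th_mul, th_cont, th_pos,
    th_nonneg, J_cont, J_deriv, J_mono, J_nonneg, J_pos, J_zero, thV_cont, Num_eq, Num_id⟩



noncomputable def Iu (n : ℕ) (q : ℝ) (ψ u : ℝ → ℝ) (r : ℝ) : ℝ :=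
  ∫ s in (0:ℝ)..r, ψ s ^ (n-1) * u s ^ q

lemma abs_mul_self_rpow_cont {p : ℝ} (hp : 1 < p) :
    Continuous fun x : ℝ => |x| ^ (p-2) * x := by
  have hp1 : (0:ℝ) < p - 1 := by linarith
  rw [continuous_iff_continuousAt]
  intro x
  rcases eq_or_ne x 0 with rfl|hx
  · have hval : |(0:ℝ)| ^ (p-2) * 0 = 0 := by simp
    rw [ContinuousAt, hval, tendsto_zero_iff_norm_tendsto_zero]
    refine squeeze_zero (fun t => norm_nonneg _) (g := fun t : ℝ => |t| ^ (p-1)) ?_ ?_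
    · intro t
      rcases eq_or_ne t 0 with rfl|ht
      · simp [Real.zero_rpow hp1.ne']
      · have hat : (0:ℝ) < |t| := abs_pos.mpr ht
        have heq : ‖|t| ^ (p-2) * t‖ = |t| ^ (p-2) * |t| := by
          rw [norm_mul, Real.norm_eq_abs, Real.norm_eq_abs,
            abs_of_nonneg (Real.rpow_nonneg (abs_nonneg t) _)]
        rw [heq, ← Real.rpow_add_one hat.ne' (p-2)]
        have : p - 2 + 1 = p - 1 := by ring
        rw [this]
    · have hc : ContinuousAt (fun t : ℝ => |t| ^ (p-1)) 0 :=
        (Real.continuousAt_rpow_const _ _ (Or.inr hp1.le)).comp continuous_abs.continuousAt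
      have h00 : |(0:ℝ)| ^ (p-1) = 0 := by simp [Real.zero_rpow hp1.ne']
      have := hc.tendsto
      rw [h00] at this
      exact this
  · exact ((Real.continuousAt_rpow_const _ _ (Or.inl (abs_ne_zero.mpr hx))).comp
      continuous_abs.continuousAt).mul continuousAt_id

structure SF (n : ℕ) (p q : ℝ) (ψ : ℝ → ℝ) (u : ℝ → ℝ) : Prop where
  u_pos : ∀ r : ℝ, 0 ≤ r → 0 < u r
  u_diff : ∀ r : ℝ, 0 ≤ r → DifferentiableAt ℝ u r
  u_cont : ContinuousOn u (Ici 0)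
  u_anti : AntitoneOn u (Ici 0)
  uq_cont : ContinuousOn (fun s => ψ s ^ (n-1) * u s ^ q) (Ici 0)
  I_pos : ∀ r : ℝ, 0 < r → 0 < Iu n q ψ u r
  du_neg : ∀ r : ℝ, 0 < r → deriv u r < 0
  du_eq : ∀ r : ℝ, 0 < r → ψ r ^ (n-1) * (-deriv u r) ^ (p-1) = Iu n q ψ u r

lemma sf {n : ℕ} {p q α : ℝ} {ψ u : ℝ → ℝ} (hn : 2 ≤ n) (hp : 1 < p) (hq : 0 < q)
    (M : MF n p ψ) (hu : IsRadialSolution n p q ψ ⊤ α u) : SF n p q ψ u := by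
  have htop : ∀ r : ℝ, ENNReal.ofReal r < ⊤ := fun r => ENNReal.ofReal_lt_top
  have u_pos : ∀ r : ℝ, 0 ≤ r → 0 < u r := fun r hr => hu.pos r hr (htop r)
  have u_diff : ∀ r : ℝ, 0 ≤ r → DifferentiableAt ℝ u r := fun r hr => hu.diff r hr (htop r)
  have u_cont : ContinuousOn u (Ici 0) :=
    fun r hr => (u_diff r hr).continuousAt.continuousWithinAt
  have du_cont : ContinuousOn (deriv u) (Ici 0) := by
    have : {r : ℝ | 0 ≤ r ∧ ENNReal.ofReal r < ⊤} = Ici 0 := by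
      ext r; simp [ENNReal.ofReal_lt_top]
    rw [← this]; exact hu.deriv_cont
  have uq_cont : ContinuousOn (fun s => ψ s ^ (n-1) * u s ^ q) (Ici 0) := by
    refine M.phi_cont.continuousOn.mul ?_
    intro x hx
    exact (u_cont x hx).rpow_const (Or.inl (u_pos x hx).ne')
  have I_pos : ∀ r : ℝ, 0 < r → 0 < Iu n q ψ u r := by
    intro r hr
    exact intervalIntegral_pos_of_pos_on (ii_aux uq_cont le_rfl hr.le)
      (fun x hx => mul_pos (M.phi_pos x hx.1) (Real.rpow_pos_of_pos (u_pos x hx.1.le) q)) hr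
  have g_eq : ∀ r : ℝ, 0 ≤ r →
      ψ r ^ (n-1) * |deriv u r| ^ (p-2) * deriv u r = - Iu n q ψ u r := by
    have key := constOn_aux (a := 0)
      (f := fun r => ψ r ^ (n-1) * |deriv u r| ^ (p-2) * deriv u r + Iu n q ψ u r)
      (f' := fun _ => 0) ?_ ?_ (fun _ _ => rfl)
    · intro r hr
      have h2 := key r hr
      have hIu0 : Iu n q ψ u 0 = 0 := integral_same
      simp only [M.phi_zero, zero_mul, hIu0, add_zero] at h2
      linarith [h2]
    · refine ContinuousOn.add ?_ (primitive_cont_aux uq_cont)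
      have hG : ContinuousOn (fun r => ψ r ^ (n-1) * (|deriv u r| ^ (p-2) * deriv u r))
          (Ici 0) := by
        refine M.phi_cont.continuousOn.mul ?_
        exact (abs_mul_self_rpow_cont hp).comp_continuousOn du_cont
      exact hG.congr (fun r _ => by ring)
    · intro r hr
      have H := (hu.eqn r hr (htop r)).fun_add (ftc_aux uq_cont hr)
      refine H.congr_deriv ?_
      ring
  have du_neg : ∀ r : ℝ, 0 < r → deriv u r < 0 := by
    intro r hr
    rcases lt_trichotomy (deriv u r) 0 with h|h|h
    · exact h
    · exfalso
      have := g_eq r hr.le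
      rw [h, mul_zero] at this
      have := I_pos r hr
      linarith
    · exfalso
      have hpos : 0 < ψ r ^ (n-1) * |deriv u r| ^ (p-2) * deriv u r :=
        mul_pos (mul_pos (M.phi_pos r hr) (Real.rpow_pos_of_pos (abs_pos.mpr h.ne') _)) h
      have := g_eq r hr.le
      have := I_pos r hr
      linarith
  have du_eq : ∀ r : ℝ, 0 < r →
      ψ r ^ (n-1) * (-deriv u r) ^ (p-1) = Iu n q ψ u r := by
    intro r hr
    have hneg := du_neg r hr
    have h1 := g_eq r hr.le
    rw [abs_of_neg hneg] at h1
    have h2 : (-deriv u r) ^ (p-1) = (-deriv u r) ^ (p-2) * (-deriv u r) := by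
      rw [← Real.rpow_add_one (neg_pos.mpr hneg).ne' (p-2)]
      have : p - 2 + 1 = p - 1 := by ring
      rw [this]
    rw [h2]
    nlinarith [h1]
  have u_anti : AntitoneOn u (Ici 0) := by
    refine antitoneOn_of_deriv_nonpos (convex_Ici 0) u_cont ?_ ?_
    · rw [interior_Ici]
      exact fun x hx => (u_diff x (le_of_lt hx)).differentiableWithinAt
    · rw [interior_Ici]
      exact fun x hx => (du_neg x hx).le
  exact ⟨u_pos, u_diff, u_cont, u_anti, uq_cont, I_pos, du_neg, du_eq⟩

lemma I_lower_base {n : ℕ} {p q : ℝ} {ψ u : ℝ → ℝ} (hq : 0 < q)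
    (M : MF n p ψ) (S : SF n p q ψ u) :
    ∀ r : ℝ, 0 < r → u r ^ q * Vv n ψ r ≤ Iu n q ψ u r := by
  intro r hr
  have h1 : (∫ s in (0:ℝ)..r, ψ s ^ (n-1) * u r ^ q) ≤ Iu n q ψ u r := by
    refine integral_mono_on hr.le ((M.phi_cont.intervalIntegrable _ _).mul_const _)
      (ii_aux S.uq_cont le_rfl hr.le) ?_
    intro x hx
    have hur : u r ≤ u x := S.u_anti hx.1 hr.le hx.2
    exact mul_le_mul_of_nonneg_left
      (Real.rpow_le_rpow (S.u_pos r hr.le).le hur hq.le) (M.phi_nonneg x hx.1)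
  rw [intervalIntegral.integral_mul_const, mul_comm] at h1
  exact h1

lemma w_step {n : ℕ} {p q m : ℝ} {ψ u : ℝ → ℝ} (hp : 1 < p) (hqp : p - 1 < q)
    (hm : m = (q + 1 - p)/(p - 1)) (M : MF n p ψ) (S : SF n p q ψ u)
    {K r : ℝ} (hK : 0 ≤ K) (hr : 0 < r)
    (hI : K * (Theta n ψ r * u r ^ q) * ψ r ^ (n-1) ≤ Iu n q ψ u r) :
    m * K ^ (1/(p-1)) * th n p ψ r ≤ deriv u r * -m * u r ^ (-m - 1) := by
  have hp1 : (0:ℝ) < p - 1 := by linarith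
  have hm0 : 0 < m := by rw [hm]; apply div_pos <;> linarith
  have hu0 : 0 < u r := S.u_pos r hr.le
  have hdu : 0 < -deriv u r := neg_pos.mpr (S.du_neg r hr)
  have hTh : 0 ≤ Theta n ψ r := M.Th_nonneg r hr.le
  have huq : 0 ≤ u r ^ q := Real.rpow_nonneg hu0.le q
  have step1 : K * (Theta n ψ r * u r ^ q) ≤ (-deriv u r) ^ (p-1) := by
    have h2 := hI
    rw [← S.du_eq r hr, mul_comm (K * (Theta n ψ r * u r ^ q))] at h2
    exact le_of_mul_le_mul_left h2 (M.phi_pos r hr)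
  have step2 : (K * (Theta n ψ r * u r ^ q)) ^ (1/(p-1)) ≤ -deriv u r := by
    have h3 := Real.rpow_le_rpow (by positivity) step1 (one_div_pos.mpr hp1).le
    rwa [← Real.rpow_mul hdu.le, mul_one_div, div_self hp1.ne', Real.rpow_one] at h3
  rw [Real.mul_rpow hK (mul_nonneg hTh huq), Real.mul_rpow hTh huq] at step2
  -- step2 : K^e * (th r * (u r ^ q)^e) ≤ -deriv u r  (with th r = Theta ^ e definitionally)
  have hqe : (u r ^ q) ^ (1/(p-1)) = u r ^ (q * (1/(p-1))) := (Real.rpow_mul hu0.le q _).symm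
  have hexp : (-m - 1) + q * (1/(p-1)) = 0 := by rw [hm]; field_simp; ring
  have hone : u r ^ (-m - 1) * u r ^ (q * (1/(p-1))) = 1 := by
    rw [← Real.rpow_add hu0, hexp, Real.rpow_zero]
  have hmul := mul_le_mul_of_nonneg_left step2
    (by positivity : (0:ℝ) ≤ m * u r ^ (-m - 1))
  calc m * K ^ (1/(p-1)) * th n p ψ r
      = m * K ^ (1/(p-1)) * th n p ψ r * (u r ^ (-m - 1) * u r ^ (q * (1/(p-1)))) := by
        rw [hone, mul_one]
    _ = m * u r ^ (-m - 1) *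
        (K ^ (1/(p-1)) * (Theta n ψ r ^ (1/(p-1)) * (u r ^ q) ^ (1/(p-1)))) := by
        rw [hqe]
        unfold th
        ring
    _ ≤ m * u r ^ (-m - 1) * -deriv u r := hmul
    _ = deriv u r * -m * u r ^ (-m - 1) := by ring

lemma w_int {n : ℕ} {p q : ℝ} {ψ u : ℝ → ℝ} (M : MF n p ψ) (S : SF n p q ψ u)
    {m κ R : ℝ} (hR : 0 ≤ R)
    (hd : ∀ r, R < r → m * κ * th n p ψ r ≤ deriv u r * -m * u r ^ (-m - 1)) :
    ∀ s r : ℝ, R ≤ s → s ≤ r →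
      u s ^ (-m) + m * κ * (Jj n p ψ r - Jj n p ψ s) ≤ u r ^ (-m) := by
  have hmono : MonotoneOn (fun r => u r ^ (-m) - m * κ * Jj n p ψ r) (Ici R) := by
    refine monoOn_aux
      (f' := fun r => deriv u r * -m * u r ^ (-m - 1) - m * κ * th n p ψ r) ?_ ?_ ?_
    · refine ContinuousOn.sub ?_
        (ContinuousOn.mul continuousOn_const (M.J_cont.mono (Ici_subset_Ici.mpr hR)))
      intro x hx
      have hx0 : (0:ℝ) ≤ x := le_trans hR hx
      exact ContinuousWithinAt.mono
        ((S.u_cont x hx0).rpow_const (Or.inl (S.u_pos x hx0).ne'))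
        (Ici_subset_Ici.mpr hR)
    · intro x hx
      have hx0 : 0 < x := lt_of_le_of_lt hR hx
      have h1 : HasDerivAt (fun r => u r ^ (-m))
          (deriv u (x) * -m * u x ^ (-m - 1)) x :=
        HasDerivAt.rpow_const ((S.u_diff x hx0.le).hasDerivAt) (Or.inl (S.u_pos x hx0.le).ne')
      exact h1.sub ((M.J_deriv x hx0).const_mul (m*κ))
    · intro x hx
      have := hd x hx
      show (0:ℝ) ≤ deriv u x * -m * u x ^ (-m - 1) - m * κ * th n p ψ x
      linarith
  intro s r hs hsr
  have h2 := hmono (a := s) hs (le_trans hs hsr) hsr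
  simp only [smul_eq_mul] at h2
  linarith [h2]

end St19


set_option maxHeartbeats 1000000
open Set intervalIntegral

/-- under the liminf condition, `∫₀^∞ Θ^{1/(p-1)} = +∞` and the precise
asymptotic formula fails for every global radial solution. -/
theorem statement_19 (n : ℕ) (hn : 2 ≤ n) (p q : ℝ) (hp1 : 1 < p) (hpn : p < n)
    (hq : (n : ℝ) * p / ((n : ℝ) - p) - 1 ≤ q)
    (ψ : ℝ → ℝ) (hψ : IsCHModel ψ)
    (hliminf : ∃ c : ℝ, 0 < c ∧ ∀ᶠ r in atTop,
      c ≤ (∫ s in (0:ℝ)..r, Theta n ψ s ^ (p / (p - 1)) * ψ s ^ (n - 1)) /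
        (ψ r ^ (n - 1) * Theta n ψ r *
          ∫ s in (0:ℝ)..r, Theta n ψ s ^ (1 / (p - 1)))) :
    Tendsto (fun r : ℝ => ∫ s in (0:ℝ)..r, Theta n ψ s ^ (1 / (p - 1)))
        atTop atTop ∧
      ∀ α : ℝ, 0 < α → ∀ u : ℝ → ℝ, IsRadialSolution n p q ψ ⊤ α u →
        ¬ Tendsto (fun r : ℝ =>
            (∫ s in (0:ℝ)..r, Theta n ψ s ^ (1 / (p - 1))) ^
                ((p - 1) / (q + 1 - p)) * u r) atTop
          (nhds (((p - 1) / (q + 1 - p)) ^ ((p - 1) / (q + 1 - p)))) := by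
  classical
  obtain ⟨c, hc, hev⟩ := hliminf
  have hp0 : (0:ℝ) < p - 1 := by linarith
  have hp00 : (0:ℝ) < p := by linarith
  have hn2 : (2:ℝ) ≤ (n:ℝ) := by exact_mod_cast hn
  have hn0 : (0:ℝ) < (n:ℝ) - p := by linarith
  have hqp : p - 1 < q := by
    have h1 : p < (n:ℝ) * p / ((n:ℝ) - p) := by
      rw [lt_div_iff₀ hn0]; nlinarith
    linarith
  have hq0 : (0:ℝ) < q := by linarith
  have M := St19.mf hn hp1 hψ
  -- eventual Num bound from liminf hypothesis
  have hNum : ∀ᶠ r in atTop, c * (St19.Vv n ψ r * St19.Jj n p ψ r) ≤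
      ∫ s in (0:ℝ)..r, St19.th n p ψ s * St19.Vv n ψ s := by
    filter_upwards [hev, eventually_gt_atTop (0:ℝ)] with r hr hr0
    have hJ : 0 < St19.Jj n p ψ r := M.J_pos r hr0
    have hden : 0 < ψ r ^ (n-1) * Theta n ψ r * St19.Jj n p ψ r :=
      mul_pos (mul_pos (M.phi_pos r hr0) (M.Th_pos r hr0)) hJ
    have hr' : c ≤ (∫ s in (0:ℝ)..r, Theta n ψ s ^ (p/(p-1)) * ψ s ^ (n-1)) /
        (ψ r ^ (n-1) * Theta n ψ r * St19.Jj n p ψ r) := hr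
    rw [le_div_iff₀ hden, M.Num_eq r hr0.le] at hr'
    calc c * (St19.Vv n ψ r * St19.Jj n p ψ r)
        = c * (ψ r ^ (n-1) * Theta n ψ r * St19.Jj n p ψ r) := by
          rw [mul_comm (ψ r ^ (n-1)) (Theta n ψ r), M.Th_mul r hr0]
      _ ≤ _ := hr'
  -- PART 1
  have hJtop : Tendsto (St19.Jj n p ψ) atTop atTop := by
    rw [tendsto_atTop]
    intro b
    by_cases hb : ∃ r : ℝ, 1 ≤ r ∧ b ≤ St19.Jj n p ψ r
    · obtain ⟨r₁, hr₁, hbr⟩ := hb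
      filter_upwards [eventually_ge_atTop r₁] with r hr
      exact hbr.trans (M.J_mono (by linarith : (0:ℝ) ≤ r₁) (by linarith : (0:ℝ) ≤ r) hr)
    · exfalso
      push_neg at hb
      have hJ1 : 0 < St19.Jj n p ψ 1 := M.J_pos 1 one_pos
      have hne : (St19.Jj n p ψ '' (Ici 1)).Nonempty :=
        ⟨_, Set.mem_image_of_mem _ (Set.mem_Ici.mpr le_rfl)⟩
      have hbdd : BddAbove (St19.Jj n p ψ '' (Ici 1)) := by
        refine ⟨b, ?_⟩
        rintro y ⟨x, hx, rfl⟩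
        exact (hb x hx).le
      obtain ⟨L, hL⟩ : ∃ L : ℝ, L = sSup (St19.Jj n p ψ '' (Ici 1)) := ⟨_, rfl⟩
      have hLe : ∀ r : ℝ, 1 ≤ r → St19.Jj n p ψ r ≤ L := by
        rw [hL]; exact fun r hr => le_csSup hbdd (Set.mem_image_of_mem _ hr)
      have hε : 0 < c * St19.Jj n p ψ 1 / 2 := by positivity
      obtain ⟨y, hyA, hyL⟩ := exists_lt_of_lt_csSup hne
        (hL ▸ (by linarith : L - c * St19.Jj n p ψ 1 / 2 < L))
      obtain ⟨r₀, hr₀1, rfl⟩ := hyA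
      have hr₀1' : (1:ℝ) ≤ r₀ := hr₀1
      obtain ⟨r, ⟨hNr, hVr⟩, hrr⟩ :=
        ((hNum.and (M.V_top.eventually_gt_atTop
          ((∫ s in (0:ℝ)..r₀, St19.th n p ψ s * St19.Vv n ψ s) * 2 /
            (c * St19.Jj n p ψ 1)))).and (eventually_ge_atTop (max r₀ 1))).exists
      have hrr₀ : r₀ ≤ r := le_trans (le_max_left _ _) hrr
      have hr1 : (1:ℝ) ≤ r := le_trans (le_max_right _ _) hrr
      have hr₀0 : (0:ℝ) ≤ r₀ := by linarith
      have hr0 : (0:ℝ) ≤ r := by linarith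
      have hadd : (∫ s in (0:ℝ)..r₀, St19.th n p ψ s * St19.Vv n ψ s) +
          (∫ s in r₀..r, St19.th n p ψ s * St19.Vv n ψ s) =
          ∫ s in (0:ℝ)..r, St19.th n p ψ s * St19.Vv n ψ s :=
        intervalIntegral.integral_add_adjacent_intervals
          (St19.ii_aux M.thV_cont le_rfl hr₀0) (St19.ii_aux M.thV_cont hr₀0 hr0)
      have haddJ : St19.Jj n p ψ r₀ + (∫ s in r₀..r, St19.th n p ψ s) = St19.Jj n p ψ r :=
        intervalIntegral.integral_add_adjacent_intervals
          (St19.ii_aux M.th_cont le_rfl hr₀0) (St19.ii_aux M.th_cont hr₀0 hr0)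
      have hmid : (∫ s in r₀..r, St19.th n p ψ s * St19.Vv n ψ s) ≤
          (∫ s in r₀..r, St19.th n p ψ s) * St19.Vv n ψ r := by
        rw [← intervalIntegral.integral_mul_const]
        refine integral_mono_on hrr₀ (St19.ii_aux M.thV_cont hr₀0 hr0)
          ((St19.ii_aux M.th_cont hr₀0 hr0).mul_const _) ?_
        intro x hx
        have hx0 : (0:ℝ) ≤ x := le_trans hr₀0 hx.1
        exact mul_le_mul_of_nonneg_left (M.V_mono hx0 hr0 hx.2) (M.th_nonneg x hx0)
      have hJdiff : (∫ s in r₀..r, St19.th n p ψ s) ≤ c * St19.Jj n p ψ 1 / 2 := by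
        have h1 : St19.Jj n p ψ r ≤ L := hLe r hr1
        linarith
      have hJr1 : St19.Jj n p ψ 1 ≤ St19.Jj n p ψ r := M.J_mono (by norm_num) hr0 hr1
      have hV0 : 0 ≤ St19.Vv n ψ r := M.V_nonneg r hr0
      have h2 : c * (St19.Vv n ψ r * St19.Jj n p ψ 1) ≤
          c * (St19.Vv n ψ r * St19.Jj n p ψ r) :=
        mul_le_mul_of_nonneg_left (mul_le_mul_of_nonneg_left hJr1 hV0) hc.le
      have h3 : (∫ s in r₀..r, St19.th n p ψ s) * St19.Vv n ψ r ≤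
          (c * St19.Jj n p ψ 1 / 2) * St19.Vv n ψ r :=
        mul_le_mul_of_nonneg_right hJdiff hV0
      have h4 : (∫ s in (0:ℝ)..r₀, St19.th n p ψ s * St19.Vv n ψ s) * 2 <
          St19.Vv n ψ r * (c * St19.Jj n p ψ 1) := by
        rw [div_lt_iff₀ (by positivity)] at hVr
        exact hVr
      nlinarith [hNr, hadd, hmid, h2, h3, h4]
  refine ⟨hJtop, ?_⟩
  -- PART 2
  intro α hα u hu H
  have S := St19.sf hn hp1 hq0 M hu
  obtain ⟨m, hm⟩ : ∃ m : ℝ, m = (q + 1 - p)/(p - 1) := ⟨_, rfl⟩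
  have hm0 : 0 < m := by rw [hm]; exact div_pos (by linarith) hp0
  have hbase : ∀ r : ℝ, 0 < r →
      (1:ℝ) * (Theta n ψ r * u r ^ q) * ψ r ^ (n-1) ≤ St19.Iu n q ψ u r := by
    intro r hr
    have h1 := St19.I_lower_base hq0 M S r hr
    calc (1:ℝ) * (Theta n ψ r * u r ^ q) * ψ r ^ (n-1)
        = u r ^ q * (Theta n ψ r * ψ r ^ (n-1)) := by ring
      _ = u r ^ q * St19.Vv n ψ r := by rw [M.Th_mul r hr]
      _ ≤ _ := h1
  have hd_base : ∀ r, (0:ℝ) < r →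
      m * 1 * St19.th n p ψ r ≤ deriv u r * -m * u r ^ (-m - 1) := by
    intro r hr
    have h1 := St19.w_step hp1 hqp hm M S (le_of_lt one_pos) hr (hbase r hr)
    rwa [Real.one_rpow] at h1
  have hw_base : ∀ s r : ℝ, 0 ≤ s → s ≤ r →
      u s ^ (-m) + m * (St19.Jj n p ψ r - St19.Jj n p ψ s) ≤ u r ^ (-m) := by
    intro s r hs hsr
    have h1 := St19.w_int M S le_rfl hd_base s r hs hsr
    rw [mul_one] at h1
    exact h1
  obtain ⟨β, hβ⟩ : ∃ β : ℝ, β = (p - 1)/(q + 1 - p) := ⟨_, rfl⟩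
  rw [← hβ] at H
  have hβ0 : 0 < β := by rw [hβ]; exact div_pos hp0 (by linarith)
  have hββ : 0 < β ^ β := Real.rpow_pos_of_pos hβ0 β
  have hqp1 : q + 1 - p ≠ 0 := ne_of_gt (by linarith)
  have hβm : β * (-m) = -1 := by rw [hβ, hm]; field_simp
  have hwJ : Tendsto (fun r => u r ^ (-m) / St19.Jj n p ψ r) atTop (nhds m) := by
    have hcomp : Tendsto (fun r : ℝ =>
        ((∫ s in (0:ℝ)..r, Theta n ψ s ^ (1/(p-1))) ^ β * u r) ^ (-m))
        atTop (nhds ((β ^ β) ^ (-m))) :=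
      ((Real.continuousAt_rpow_const _ _ (Or.inl hββ.ne')).tendsto).comp H
    have hval : (β ^ β) ^ (-m) = m := by
      rw [← Real.rpow_mul hβ0.le, hβm, Real.rpow_neg_one, hβ, inv_div, hm]
    rw [hval] at hcomp
    refine hcomp.congr' ?_
    filter_upwards [eventually_ge_atTop (1:ℝ)] with r hr
    have hr0 : (0:ℝ) ≤ r := by linarith
    have hJ : 0 < St19.Jj n p ψ r := M.J_pos r (by linarith)
    have hu0 : 0 < u r := S.u_pos r hr0
    show ((St19.Jj n p ψ r) ^ β * u r) ^ (-m) = u r ^ (-m) / St19.Jj n p ψ r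
    rw [Real.mul_rpow (Real.rpow_nonneg hJ.le β) hu0.le, ← Real.rpow_mul hJ.le,
      hβm, Real.rpow_neg_one]
    ring
  have h2m : ∀ᶠ r in atTop, u r ^ (-m) ≤ 2 * m * St19.Jj n p ψ r := by
    have hlt : ∀ᶠ r in atTop, u r ^ (-m) / St19.Jj n p ψ r < 2 * m :=
      hwJ.eventually_lt_const (by linarith)
    filter_upwards [hlt, eventually_ge_atTop (1:ℝ)] with r h1 hr1
    have hJ : 0 < St19.Jj n p ψ r := M.J_pos r (by linarith)
    rw [div_lt_iff₀ hJ] at h1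
    linarith
  obtain ⟨δ, hδ⟩ : ∃ δ : ℝ, δ = q * c / (2 * m) := ⟨_, rfl⟩
  have hδ0 : 0 < δ := by rw [hδ]; positivity
  obtain ⟨K, hKdef⟩ : ∃ K : ℝ, K = 1 + δ := ⟨_, rfl⟩
  have hK1 : (1:ℝ) < K := by rw [hKdef]; linarith
  have hK0 : (0:ℝ) ≤ K := by linarith
  -- improved bound
  have himp : ∀ᶠ r in atTop,
      K * (Theta n ψ r * u r ^ q) * ψ r ^ (n-1) ≤ St19.Iu n q ψ u r := by
    filter_upwards [hNum, h2m, eventually_gt_atTop (0:ℝ)] with r hNr h2mr hr0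
    have hu0 : 0 < u r := S.u_pos r hr0.le
    have hW : 0 < u r ^ (-m) := Real.rpow_pos_of_pos hu0 _
    have hJr : 0 < St19.Jj n p ψ r := M.J_pos r hr0
    have hα' : 0 < α ^ (-m) := Real.rpow_pos_of_pos hα _
    have hw0r : α ^ (-m) + m * St19.Jj n p ψ r ≤ u r ^ (-m) := by
      have h1 := hw_base 0 r le_rfl hr0.le
      rwa [hu.init, M.J_zero, sub_zero] at h1
    have huq0 : 0 ≤ u r ^ q := Real.rpow_nonneg hu0.le q
    -- pointwise bound
    have hpt : ∀ x ∈ Icc (0:ℝ) r,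
        ψ x ^ (n-1) * (u r ^ q *
          (1 + q / u r ^ (-m) * (St19.Jj n p ψ r - St19.Jj n p ψ x)))
          ≤ ψ x ^ (n-1) * u x ^ q := by
      intro x hx
      refine mul_le_mul_of_nonneg_left ?_ (M.phi_nonneg x hx.1)
      have hJx0 : 0 ≤ St19.Jj n p ψ x := M.J_nonneg x hx.1
      have hJxr : St19.Jj n p ψ x ≤ St19.Jj n p ψ r := M.J_mono hx.1 hr0.le hx.2
      have hux : 0 < u x := S.u_pos x hx.1
      have hWx : 0 < u x ^ (-m) := Real.rpow_pos_of_pos hux _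
      have hwx : u x ^ (-m) + m * (St19.Jj n p ψ r - St19.Jj n p ψ x) ≤ u r ^ (-m) :=
        hw_base x r hx.1 hx.2
      have hΔ0 : 0 ≤ St19.Jj n p ψ r - St19.Jj n p ψ x := by linarith
      have hmΔ : m * (St19.Jj n p ψ r - St19.Jj n p ψ x) < u r ^ (-m) := by
        have h5 : m * (St19.Jj n p ψ r - St19.Jj n p ψ x) ≤ m * St19.Jj n p ψ r :=
          mul_le_mul_of_nonneg_left (by linarith) hm0.le
        linarith
      obtain ⟨t, ht⟩ : ∃ t : ℝ, t = m * (St19.Jj n p ψ r - St19.Jj n p ψ x) / u r ^ (-m) := ⟨_, rfl⟩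
      have ht0 : 0 ≤ t := by rw [ht]; positivity
      have ht1 : t < 1 := by rw [ht, div_lt_one hW]; exact hmΔ
      have hbern := St19.bernoulli_aux (a := q/m) (div_pos hq0 hm0) ht0 ht1
      have hxq : u x ^ q = (u x ^ (-m)) ^ (-(q/m)) := by
        rw [← Real.rpow_mul hux.le]
        congr 1
        field_simp
      have hrq : u r ^ q = (u r ^ (-m)) ^ (-(q/m)) := by
        rw [← Real.rpow_mul hu0.le]
        congr 1
        field_simp
      have hstep1 : (u r ^ (-m) - m * (St19.Jj n p ψ r - St19.Jj n p ψ x)) ^ (-(q/m))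
          ≤ (u x ^ (-m)) ^ (-(q/m)) :=
        Real.rpow_le_rpow_of_nonpos hWx (by linarith)
          (neg_nonpos_of_nonneg (div_nonneg hq0.le hm0.le))
      have hfact : u r ^ (-m) - m * (St19.Jj n p ψ r - St19.Jj n p ψ x)
          = u r ^ (-m) * (1 - t) := by
        rw [ht]; field_simp
      have hexpand : (u r ^ (-m) * (1 - t)) ^ (-(q/m)) =
          (u r ^ (-m)) ^ (-(q/m)) * (1 - t) ^ (-(q/m)) :=
        Real.mul_rpow hW.le (by linarith)
      have hqt : 1 + q / u r ^ (-m) * (St19.Jj n p ψ r - St19.Jj n p ψ x)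
          ≤ (1 - t) ^ (-(q/m)) := by
        have he : q/m * t = q / u r ^ (-m) * (St19.Jj n p ψ r - St19.Jj n p ψ x) := by
          rw [ht]
          field_simp
        rw [← he]
        exact hbern
      calc u r ^ q * (1 + q / u r ^ (-m) * (St19.Jj n p ψ r - St19.Jj n p ψ x))
          ≤ u r ^ q * (1 - t) ^ (-(q/m)) := mul_le_mul_of_nonneg_left hqt huq0
        _ = (u r ^ (-m)) ^ (-(q/m)) * (1 - t) ^ (-(q/m)) := by rw [← hrq]
        _ = (u r ^ (-m) * (1 - t)) ^ (-(q/m)) := hexpand.symm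
        _ = (u r ^ (-m) - m * (St19.Jj n p ψ r - St19.Jj n p ψ x)) ^ (-(q/m)) := by
            rw [hfact]
        _ ≤ (u x ^ (-m)) ^ (-(q/m)) := hstep1
        _ = u x ^ q := hxq.symm
    -- the split of the lower integrand
    have hsplit : (fun x => ψ x ^ (n-1) * (u r ^ q *
        (1 + q / u r ^ (-m) * (St19.Jj n p ψ r - St19.Jj n p ψ x))))
        = fun x => (u r ^ q * (1 + q / u r ^ (-m) * St19.Jj n p ψ r)) * ψ x ^ (n-1)
          - (u r ^ q * (q / u r ^ (-m))) * (ψ x ^ (n-1) * St19.Jj n p ψ x) := by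
      funext x
      ring
    have hi1 : IntervalIntegrable (fun x => ψ x ^ (n-1) * (u r ^ q *
        (1 + q / u r ^ (-m) * (St19.Jj n p ψ r - St19.Jj n p ψ x)))) volume 0 r := by
      rw [hsplit]
      exact ((M.phi_cont.intervalIntegrable _ _).const_mul _).sub
        ((St19.ii_aux (M.phi_cont.continuousOn.mul M.J_cont) le_rfl hr0.le).const_mul _)
    have hint := integral_mono_on hr0.le hi1 (St19.ii_aux S.uq_cont le_rfl hr0.le) hpt
    have hval : (∫ x in (0:ℝ)..r, ψ x ^ (n-1) * (u r ^ q *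
        (1 + q / u r ^ (-m) * (St19.Jj n p ψ r - St19.Jj n p ψ x))))
        = u r ^ q * St19.Vv n ψ r + (u r ^ q * (q / u r ^ (-m))) *
          (∫ s in (0:ℝ)..r, St19.th n p ψ s * St19.Vv n ψ s) := by
      rw [hsplit, intervalIntegral.integral_sub
        (by exact (M.phi_cont.intervalIntegrable _ _).const_mul _)
        (by exact (St19.ii_aux (M.phi_cont.continuousOn.mul M.J_cont) le_rfl hr0.le).const_mul _),
        intervalIntegral.integral_const_mul, intervalIntegral.integral_const_mul]
      have hid := M.Num_id r hr0.le
      have hVv : (∫ x in (0:ℝ)..r, ψ x ^ (n-1)) = St19.Vv n ψ r := rfl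
      rw [hVv]
      rw [hid]
      ring
    -- final assembly
    have hfrac : δ * (u r ^ q * St19.Vv n ψ r) ≤
        (u r ^ q * (q / u r ^ (-m))) * (c * (St19.Vv n ψ r * St19.Jj n p ψ r)) := by
      have hV0 : 0 ≤ St19.Vv n ψ r := M.V_nonneg r hr0.le
      rw [← mul_le_mul_iff_left₀ hW]
      have hW2 : u r ^ q * (q / u r ^ (-m)) * (c * (St19.Vv n ψ r * St19.Jj n p ψ r)) *
          u r ^ (-m) = (q * c * (u r ^ q * St19.Vv n ψ r)) * St19.Jj n p ψ r := by
        field_simp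
      have hδ2 : δ * (u r ^ q * St19.Vv n ψ r) * u r ^ (-m) =
          (q * c * (u r ^ q * St19.Vv n ψ r)) * (u r ^ (-m) / (2 * m)) := by
        rw [hδ]
        field_simp
        try ring
      rw [hW2, hδ2]
      have h7 : u r ^ (-m) / (2 * m) ≤ St19.Jj n p ψ r := by
        rw [div_le_iff₀ (by positivity : (0:ℝ) < 2 * m)]
        linarith [h2mr]
      exact mul_le_mul_of_nonneg_left h7 (by positivity)
    have hNr' : (u r ^ q * (q / u r ^ (-m))) * (c * (St19.Vv n ψ r * St19.Jj n p ψ r)) ≤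
        (u r ^ q * (q / u r ^ (-m))) *
          (∫ s in (0:ℝ)..r, St19.th n p ψ s * St19.Vv n ψ s) :=
      mul_le_mul_of_nonneg_left hNr (by positivity)
    have hTV : K * (Theta n ψ r * u r ^ q) * ψ r ^ (n-1)
        = K * (u r ^ q * St19.Vv n ψ r) := by
      rw [← M.Th_mul r hr0]
      ring
    rw [hTV, hKdef]
    calc (1 + δ) * (u r ^ q * St19.Vv n ψ r)
        = u r ^ q * St19.Vv n ψ r + δ * (u r ^ q * St19.Vv n ψ r) := by ring
      _ ≤ u r ^ q * St19.Vv n ψ r + (u r ^ q * (q / u r ^ (-m))) *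
          (∫ s in (0:ℝ)..r, St19.th n p ψ s * St19.Vv n ψ s) := by
          linarith [hfrac.trans hNr']
      _ = ∫ x in (0:ℝ)..r, ψ x ^ (n-1) * (u r ^ q *
          (1 + q / u r ^ (-m) * (St19.Jj n p ψ r - St19.Jj n p ψ x))) := hval.symm
      _ ≤ St19.Iu n q ψ u r := hint
  -- extract threshold and derive contradiction
  obtain ⟨R₀, hR₀⟩ := eventually_atTop.mp himp
  obtain ⟨R, hR⟩ : ∃ R : ℝ, R = max R₀ 1 := ⟨_, rfl⟩
  have hR0 : (0:ℝ) ≤ R := by rw [hR]; exact le_trans zero_le_one (le_max_right _ _)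
  have hd_imp : ∀ r, R < r → m * K ^ (1/(p-1)) * St19.th n p ψ r ≤
      deriv u r * -m * u r ^ (-m - 1) := by
    intro r hr
    exact St19.w_step hp1 hqp hm M S hK0 (lt_of_le_of_lt hR0 hr)
      (hR₀ r (le_of_lt (lt_of_le_of_lt (hR ▸ le_max_left _ _) hr)))
  have hwi := St19.w_int M S hR0 hd_imp
  have hKpos : (0:ℝ) < K := by linarith
  have hκ1 : 1 < K ^ (1/(p-1)) :=
    (Real.one_lt_rpow_iff_of_pos hKpos).mpr (Or.inl ⟨hK1, one_div_pos.mpr hp0⟩)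
  have hev2 : ∀ᶠ r in atTop,
      m * K ^ (1/(p-1)) + (u R ^ (-m) - m * K ^ (1/(p-1)) * St19.Jj n p ψ R) / St19.Jj n p ψ r
      ≤ u r ^ (-m) / St19.Jj n p ψ r := by
    filter_upwards [eventually_ge_atTop R, eventually_ge_atTop (1:ℝ)] with r hrR hr1
    have hJ : 0 < St19.Jj n p ψ r := M.J_pos r (by linarith)
    have h1 := hwi R r le_rfl hrR
    have h2 : (u R ^ (-m) + m * K ^ (1/(p-1)) * (St19.Jj n p ψ r - St19.Jj n p ψ R)) / St19.Jj n p ψ r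
        ≤ u r ^ (-m) / St19.Jj n p ψ r := by
      apply div_le_div_of_nonneg_right h1 hJ.le
    calc m * K ^ (1/(p-1)) + (u R ^ (-m) - m * K ^ (1/(p-1)) * St19.Jj n p ψ R) / St19.Jj n p ψ r
        = (u R ^ (-m) + m * K ^ (1/(p-1)) * (St19.Jj n p ψ r - St19.Jj n p ψ R)) / St19.Jj n p ψ r := by
          field_simp
          ring
      _ ≤ _ := h2
  have hlim2 : Tendsto (fun r =>
      m * K ^ (1/(p-1)) + (u R ^ (-m) - m * K ^ (1/(p-1)) * St19.Jj n p ψ R) / St19.Jj n p ψ r)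
      atTop (nhds (m * K ^ (1/(p-1)) + 0)) :=
    tendsto_const_nhds.add (Tendsto.div_atTop tendsto_const_nhds hJtop)
  have hfin : m * K ^ (1/(p-1)) + 0 ≤ m := le_of_tendsto_of_tendsto hlim2 hwJ hev2
  nlinarith [hm0, hκ1]
end
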